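/- arXiv:1809.03085 — 12 statements merged into one kernel-verified Lean document; each statement's English description precedes it below -/
import Mathlib

section
/- Let (X, 𝒯) be a connected door space, i.e., a topological space in which every proper nonempty subset of X is either open or closed, but not both. Let A and B be two disjoint nonempty subsets of X such that A is open and B is closed. Then for every subset C of X with C ⊆ X \ (A ∪ B), the set A ∪ C is open and the set B ∪ C is closed. -/
lemma key_open {X : Type*} [TopologicalSpace X]
    (hdoor : ∀ A : Set X, A.Nonempty → A ≠ Set.univ → Xor' (IsOpen A) (IsClosed A))
    (A B : Set X) (hA : A.Nonempty) (hB : B.Nonempty)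
    (hAB : Disjoint A B) (hAo : IsOpen A) (hBc : IsClosed B)
    (x : X) (hx : x ∉ A ∪ B) : IsOpen (A ∪ {x}) := by
  obtain ⟨b, hb⟩ := hB
  have hxA : x ∉ A := fun h => hx (Or.inl h)
  have hxB : x ∉ B := fun h => hx (Or.inr h)
  have hdisj : ∀ y, y ∈ A → y ∉ B := fun y hy => Set.disjoint_left.mp hAB hy
  have hbA : b ∉ A := fun h => hdisj b h hb
  by_contra hno
  have hne : (A ∪ {x} : Set X).Nonempty := ⟨x, Or.inr rfl⟩
  have hprop : (A ∪ {x} : Set X) ≠ Set.univ := by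
    intro h
    have hbm : b ∈ A ∪ ({x} : Set X) := h ▸ Set.mem_univ b
    rcases hbm with h' | h'
    · exact hbA h'
    · exact hxB (by rwa [Set.mem_singleton_iff.mp h'] at hb)
  have hcl : IsClosed (A ∪ {x}) := by
    rcases hdoor _ hne hprop with ⟨ho, _⟩ | ⟨hc, _⟩
    · exact absurd ho hno
    · exact hc
  have hAprop : A ≠ Set.univ := fun h => hxA (h ▸ Set.mem_univ x)
  have hAnc : ¬ IsClosed A := by
    rcases hdoor A hA hAprop with ⟨_, h⟩ | ⟨_, h'⟩
    · exact h
    · exact absurd hAo h'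
  have hABne : (A ∪ B).Nonempty := ⟨b, Or.inr hb⟩
  have hABprop : (A ∪ B) ≠ Set.univ := fun h => hx (h ▸ Set.mem_univ x)
  rcases hdoor _ hABne hABprop with ⟨ho, _⟩ | ⟨hc, _⟩
  · -- A ∪ B open ⇒ Bᶜ closed, contradiction
    have hBcne : (Bᶜ : Set X).Nonempty := ⟨x, hxB⟩
    have hBcprop : (Bᶜ : Set X) ≠ Set.univ := by
      intro h
      exact (h ▸ Set.mem_univ b : b ∈ Bᶜ) hb
    have hBcnc : ¬ IsClosed (Bᶜ : Set X) := by
      rcases hdoor _ hBcne hBcprop with ⟨_, h⟩ | ⟨_, h'⟩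
      · exact h
      · exact absurd hBc.isOpen_compl h'
    apply hBcnc
    have heq : (Bᶜ : Set X) = (A ∪ {x}) ∪ (A ∪ B)ᶜ := by
      ext y
      simp only [Set.mem_compl_iff, Set.mem_union, Set.mem_singleton_iff]
      constructor
      · intro hy
        by_cases h1 : y ∈ A
        · exact Or.inl (Or.inl h1)
        · exact Or.inr (fun h => h.elim h1 hy)
      · rintro (h | h) hyB
        · rcases h with h | h
          · exact hdisj y h hyB
          · exact hxB (h ▸ hyB)
        · exact h (Or.inr hyB)
    rw [heq]
    exact hcl.union ho.isClosed_compl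
  · -- A ∪ B closed ⇒ A closed, contradiction
    apply hAnc
    have heq : A = (A ∪ {x}) ∩ (A ∪ B) := by
      ext y
      simp only [Set.mem_inter_iff, Set.mem_union, Set.mem_singleton_iff]
      constructor
      · intro hy; exact ⟨Or.inl hy, Or.inl hy⟩
      · rintro ⟨h1 | h1, h2 | h2⟩
        · exact h1
        · exact h1
        · exact h2
        · exact absurd (h1 ▸ h2) hxB
    rw [heq]
    exact hcl.inter hc

/-- In a connected door space, if A is open, B is closed, A and B are
disjoint and nonempty, then for every C ⊆ X \ (A ∪ B), A ∪ C is open and B ∪ C is closed. -/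
theorem stmt_0 {X : Type*} [TopologicalSpace X]
    (hdoor : ∀ A : Set X, A.Nonempty → A ≠ Set.univ → Xor' (IsOpen A) (IsClosed A))
    (A B : Set X) (hA : A.Nonempty) (hB : B.Nonempty)
    (hAB : Disjoint A B) (hAo : IsOpen A) (hBc : IsClosed B)
    (C : Set X) (hC : C ⊆ (A ∪ B)ᶜ) :
    IsOpen (A ∪ C) ∧ IsClosed (B ∪ C) := by
  have hdisj : ∀ y, y ∈ A → y ∉ B := fun y hy => Set.disjoint_left.mp hAB hy
  have hCA : ∀ y, y ∈ C → y ∉ A := fun y hy h => hC hy (Or.inl h)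
  have hCB : ∀ y, y ∈ C → y ∉ B := fun y hy h => hC hy (Or.inr h)
  constructor
  · have heq : A ∪ C = A ∪ ⋃ x ∈ C, (A ∪ {x}) := by
      ext y
      simp only [Set.mem_union, Set.mem_iUnion, Set.mem_singleton_iff]
      constructor
      · rintro (h | h)
        · exact Or.inl h
        · exact Or.inr ⟨y, h, Or.inr rfl⟩
      · rintro (h | ⟨x, hxC, h | h⟩)
        · exact Or.inl h
        · exact Or.inl h
        · exact Or.inr (h ▸ hxC)
    rw [heq]
    exact hAo.union (isOpen_iUnion fun x => isOpen_iUnion fun hxC =>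
      key_open hdoor A B hA hB hAB hAo hBc x (hC hxC))
  · rw [← isOpen_compl_iff]
    have heq : (B ∪ C)ᶜ = A ∪ ⋃ x ∈ (A ∪ B ∪ C)ᶜ, (A ∪ {x}) := by
      ext y
      simp only [Set.mem_compl_iff, Set.mem_union, Set.mem_iUnion, Set.mem_singleton_iff,
        not_or]
      constructor
      · rintro ⟨hyB, hyC⟩
        by_cases h1 : y ∈ A
        · exact Or.inl h1
        · exact Or.inr ⟨y, ⟨⟨h1, hyB⟩, hyC⟩, Or.inr rfl⟩
      · rintro (h | ⟨x, ⟨⟨hxA, hxB⟩, hxC⟩, h | h⟩)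
        · exact ⟨hdisj y h, fun hc => hCA y hc h⟩
        · exact ⟨hdisj y h, fun hc => hCA y hc h⟩
        · exact ⟨h ▸ hxB, h ▸ hxC⟩
    rw [heq]
    exact hAo.union (isOpen_iUnion fun x => isOpen_iUnion fun hx =>
      key_open hdoor A B hA hB hAB hAo hBc x (fun h => hx (Or.inl h)))
end

section
/- Let (X, 𝒯) be a connected door space, i.e., a topological space in which every proper nonempty subset of X is either open or closed, but not both. Then there do not exist four pairwise disjoint nonempty subsets A, B, C, D of X such that A and B are open while C and D are closed. -/
/-- Auxiliary: a set disjoint from a nonempty set is not `univ`. -/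
lemma aux_ne_univ {X : Type*} {S B : Set X} (hB : B.Nonempty) (h : Disjoint S B) :
    S ≠ Set.univ := by
  obtain ⟨b, hb⟩ := hB
  intro hS
  exact Set.disjoint_left.mp h (hS ▸ Set.mem_univ b) hb

/-- Auxiliary: the main contradiction, assuming `A ∪ C` is closed. -/
lemma aux_main {X : Type*} [TopologicalSpace X]
    (hdoor : ∀ A : Set X, A.Nonempty → A ≠ Set.univ → Xor' (IsOpen A) (IsClosed A))
    (A B C D : Set X)
    (hA : A.Nonempty) (hB : B.Nonempty) (hC : C.Nonempty) (hD : D.Nonempty)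
    (hAB : Disjoint A B) (hAC : Disjoint A C) (hAD : Disjoint A D)
    (hBC : Disjoint B C) (hBD : Disjoint B D) (hCD : Disjoint C D)
    (hAo : IsOpen A) (hBo : IsOpen B) (hCc : IsClosed C) (hDc : IsClosed D)
    (hACc : IsClosed (A ∪ C)) : False := by
  have dAB := Set.disjoint_left.mp hAB
  have dAC := Set.disjoint_left.mp hAC
  have dAD := Set.disjoint_left.mp hAD
  have dBC := Set.disjoint_left.mp hBC
  have dBD := Set.disjoint_left.mp hBD
  have dCD := Set.disjoint_left.mp hCD
  -- A is not closed, B is not closed, C is not open, D is not open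
  have hAnc : ¬ IsClosed A := by
    rcases hdoor A hA (aux_ne_univ hC hAC) with ⟨_, h⟩ | ⟨_, h⟩
    · exact h
    · exact absurd hAo h
  have hBnc : ¬ IsClosed B := by
    rcases hdoor B hB (aux_ne_univ hC hBC) with ⟨_, h⟩ | ⟨_, h⟩
    · exact h
    · exact absurd hBo h
  have hCno : ¬ IsOpen C := by
    rcases hdoor C hC (aux_ne_univ hA (hAC.symm)) with ⟨_, h⟩ | ⟨_, h⟩
    · exact absurd hCc h
    · exact h
  have hDno : ¬ IsOpen D := by
    rcases hdoor D hD (aux_ne_univ hA (hAD.symm)) with ⟨_, h⟩ | ⟨_, h⟩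
    · exact absurd hDc h
    · exact h
  -- A ∪ D is open
  have hADo : IsOpen (A ∪ D) := by
    rcases hdoor (A ∪ D) (hA.mono Set.subset_union_left)
        (aux_ne_univ hB (Set.disjoint_union_left.mpr ⟨hAB, hBD.symm⟩)) with ⟨h, _⟩ | ⟨h, _⟩
    · exact h
    · exfalso
      have heq : (A ∪ C) ∩ (A ∪ D) = A := by
        ext x
        simp only [Set.mem_inter_iff, Set.mem_union]
        constructor
        · rintro ⟨hx | hx, hy | hy⟩ <;> first | exact hx | exact hy | exact absurd hy (dCD hx)
        · exact fun hx => ⟨Or.inl hx, Or.inl hx⟩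
      exact hAnc (heq ▸ hACc.inter h)
  -- B ∪ D is closed
  have hBDc : IsClosed (B ∪ D) := by
    rcases hdoor (B ∪ D) (hB.mono Set.subset_union_left)
        (aux_ne_univ hA (Set.disjoint_union_left.mpr ⟨hAB.symm, hAD.symm⟩)) with ⟨h, _⟩ | ⟨h, _⟩
    · exfalso
      have heq : (A ∪ D) ∩ (B ∪ D) = D := by
        ext x
        simp only [Set.mem_inter_iff, Set.mem_union]
        constructor
        · rintro ⟨hx | hx, hy | hy⟩ <;>
            first | exact hx | exact hy | exact absurd hy (dAB hx)
        · exact fun hx => ⟨Or.inr hx, Or.inr hx⟩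
      exact hDno (heq ▸ hADo.inter h)
    · exact h
  -- B ∪ C is open
  have hBCo : IsOpen (B ∪ C) := by
    rcases hdoor (B ∪ C) (hB.mono Set.subset_union_left)
        (aux_ne_univ hA (Set.disjoint_union_left.mpr ⟨hAB.symm, hAC.symm⟩)) with ⟨h, _⟩ | ⟨h, _⟩
    · exact h
    · exfalso
      have heq : (B ∪ C) ∩ (B ∪ D) = B := by
        ext x
        simp only [Set.mem_inter_iff, Set.mem_union]
        constructor
        · rintro ⟨hx | hx, hy | hy⟩ <;>
            first | exact hx | exact hy | exact absurd hy (dCD hx)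
        · exact fun hx => ⟨Or.inl hx, Or.inl hx⟩
      exact hBnc (heq ▸ h.inter hBDc)
  -- S = A ∪ B ∪ C ∪ D is both open and closed
  have hSeq : (A ∪ C) ∪ (B ∪ D) = (A ∪ D) ∪ (B ∪ C) := by
    ext x; simp only [Set.mem_union]; tauto
  have hSo : IsOpen ((A ∪ C) ∪ (B ∪ D)) := hSeq ▸ hADo.union hBCo
  have hSc : IsClosed ((A ∪ C) ∪ (B ∪ D)) := hACc.union hBDc
  by_cases hU : (A ∪ C) ∪ (B ∪ D) = Set.univ
  · -- then B ∪ D = (A ∪ C)ᶜ is open, but it is closed and proper: contradiction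
    have hcompl : (A ∪ C)ᶜ = B ∪ D := by
      ext x
      simp only [Set.mem_compl_iff, Set.mem_union]
      constructor
      · intro hx
        have : x ∈ (A ∪ C) ∪ (B ∪ D) := hU ▸ Set.mem_univ x
        simp only [Set.mem_union] at this
        tauto
      · rintro (hx | hx) (hy | hy)
        · exact dAB hy hx
        · exact dBC hx hy
        · exact dAD hy hx
        · exact dCD hy hx
    have hBDo : IsOpen (B ∪ D) := hcompl ▸ hACc.isOpen_compl
    rcases hdoor (B ∪ D) (hB.mono Set.subset_union_left)
        (aux_ne_univ hA (Set.disjoint_union_left.mpr ⟨hAB.symm, hAD.symm⟩)) with ⟨_, h⟩ | ⟨_, h⟩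
    · exact h hBDc
    · exact h hBDo
  · rcases hdoor _ (hA.mono (Set.subset_union_left.trans Set.subset_union_left)) hU
        with ⟨_, h⟩ | ⟨_, h⟩
    · exact h hSc
    · exact h hSo

/-- A connected door space satisfies OCC: there are no four pairwise disjoint
nonempty subsets A, B, C, D with A, B open and C, D closed. -/
theorem stmt_1 {X : Type*} [TopologicalSpace X]
    (hdoor : ∀ A : Set X, A.Nonempty → A ≠ Set.univ → Xor' (IsOpen A) (IsClosed A)) :
    ¬ ∃ A B C D : Set X,
        A.Nonempty ∧ B.Nonempty ∧ C.Nonempty ∧ D.Nonempty ∧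
        Disjoint A B ∧ Disjoint A C ∧ Disjoint A D ∧
        Disjoint B C ∧ Disjoint B D ∧ Disjoint C D ∧
        IsOpen A ∧ IsOpen B ∧ IsClosed C ∧ IsClosed D := by
  rintro ⟨A, B, C, D, hA, hB, hC, hD, hAB, hAC, hAD, hBC, hBD, hCD, hAo, hBo, hCc, hDc⟩
  -- Case on whether A ∪ C is open or closed
  rcases hdoor (A ∪ C) (hA.mono Set.subset_union_left)
      (aux_ne_univ hB (Set.disjoint_union_left.mpr ⟨hAB, hBC.symm⟩)) with ⟨hACo, _⟩ | ⟨hACc, _⟩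
  · -- A ∪ C open: then B ∪ C must be closed (else C would be open); use symmetry A ↔ B
    have hCno : ¬ IsOpen C := by
      rcases hdoor C hC (aux_ne_univ hA (hAC.symm)) with ⟨_, h⟩ | ⟨_, h⟩
      · exact absurd hCc h
      · exact h
    have hBCc : IsClosed (B ∪ C) := by
      rcases hdoor (B ∪ C) (hB.mono Set.subset_union_left)
          (aux_ne_univ hA (Set.disjoint_union_left.mpr ⟨hAB.symm, hAC.symm⟩)) with ⟨h, _⟩ | ⟨h, _⟩
      · exfalso
        have heq : (A ∪ C) ∩ (B ∪ C) = C := by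
          ext x
          simp only [Set.mem_inter_iff, Set.mem_union]
          constructor
          · rintro ⟨hx | hx, hy | hy⟩
            · exact absurd hy (Set.disjoint_left.mp hAB hx)
            · exact hy
            · exact hx
            · exact hx
          · exact fun hx => ⟨Or.inr hx, Or.inr hx⟩
        exact hCno (heq ▸ hACo.inter h)
      · exact h
    exact aux_main hdoor B A C D hB hA hC hD hAB.symm hBC hBD hAC hAD hCD
      hBo hAo hCc hDc hBCc
  · exact aux_main hdoor A B C D hA hB hC hD hAB hAC hAD hBC hBD hCD
      hAo hBo hCc hDc hACc
end

section
/- Let (X, 𝒯) be a connected door space, i.e., a topological space in which every proper nonempty subset of X is either open or closed, but not both. Suppose a ∈ X is such that the singleton {a} is closed and for every b ∈ X with b ≠ a the singleton {b} is not closed. Then 𝒯 = {A ⊆ X : a ∉ A} ∪ {X}, i.e., 𝒯 is the excluded point topology at a. -/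
/-- in a connected door space, if `{a}` is the unique closed singleton,
then the topology is the excluded point topology at `a`. -/
theorem stmt_3 {X : Type*} [TopologicalSpace X]
    (hdoor : ∀ A : Set X, A.Nonempty → A ≠ Set.univ → Xor' (IsOpen A) (IsClosed A))
    (a : X) (ha : IsClosed ({a} : Set X))
    (hb : ∀ b : X, b ≠ a → ¬ IsClosed ({b} : Set X)) :
    {A : Set X | IsOpen A} = {A : Set X | a ∉ A} ∪ {Set.univ} := by
  -- singletons other than {a} are open
  have hsing : ∀ b : X, b ≠ a → IsOpen ({b} : Set X) := by
    intro b hba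
    have hne : ({b} : Set X) ≠ Set.univ := by
      intro h
      exact hba (h ▸ Set.mem_univ a).symm
    rcases hdoor {b} (Set.singleton_nonempty b) hne with ⟨h, _⟩ | ⟨h, _⟩
    · exact h
    · exact absurd h (hb b hba)
  -- key lemma: an open set containing a is univ
  have key : ∀ A : Set X, IsOpen A → a ∈ A → A = Set.univ := by
    intro A hA haA
    by_contra hne
    have hcne : Aᶜ.Nonempty := by
      rw [Set.nonempty_compl]; exact hne
    have hcneu : Aᶜ ≠ Set.univ := by
      intro h
      have : a ∈ Aᶜ := h ▸ Set.mem_univ a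
      exact this haA
    have hcopen : IsOpen Aᶜ := by
      have : Aᶜ = ⋃ b ∈ Aᶜ, ({b} : Set X) := by
        ext x; simp
      rw [this]
      refine isOpen_biUnion fun b hbA => hsing b ?_
      intro h; exact hbA (h ▸ haA)
    rcases hdoor Aᶜ hcne hcneu with ⟨_, h⟩ | ⟨_, h⟩
    · exact h (isClosed_compl_iff.mpr hA)
    · exact h hcopen
  ext A
  simp only [Set.mem_setOf_eq, Set.mem_union, Set.mem_singleton_iff]
  constructor
  · intro hA
    by_cases haA : a ∈ A
    · exact Or.inr (key A hA haA)
    · exact Or.inl haA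
  · rintro (haA | rfl)
    · rcases Set.eq_empty_or_nonempty A with rfl | hAne
      · exact isOpen_empty
      · have hAu : A ≠ Set.univ := fun h => haA (h ▸ Set.mem_univ a)
        rcases hdoor A hAne hAu with ⟨h, _⟩ | ⟨h, _⟩
        · exact h
        · exfalso
          have hopen : IsOpen Aᶜ := isOpen_compl_iff.mpr h
          have : Aᶜ = Set.univ := key Aᶜ hopen haA
          rw [Set.compl_univ_iff] at this
          exact hAne.ne_empty this
    · exact isOpen_univ
end

section
/- Let (X, 𝒯) be a connected door space, i.e., a topological space in which every proper nonempty subset of X is either open or closed, but not both. Suppose a ∈ X is such that the singleton {a} is open and for every b ∈ X with b ≠ a the singleton {b} is not open. Then 𝒯 = {A ⊆ X : a ∈ A} ∪ {∅}, i.e., 𝒯 is the included point topology at a. -/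
/-- in a connected door space, if `{a}` is the unique open singleton,
then the topology is the included point topology at `a`. -/
theorem stmt_4 {X : Type*} [TopologicalSpace X]
    (hdoor : ∀ A : Set X, A.Nonempty → A ≠ Set.univ → Xor' (IsOpen A) (IsClosed A))
    (a : X) (ha : IsOpen ({a} : Set X))
    (hb : ∀ b : X, b ≠ a → ¬ IsOpen ({b} : Set X)) :
    {A : Set X | IsOpen A} = {A : Set X | a ∈ A} ∪ {∅} := by
  have key : ∀ U : Set X, IsOpen U → U.Nonempty → a ∈ U := by
    rintro U hU ⟨b, hb'⟩
    by_contra haU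
    have hba : b ≠ a := fun h => haU (h ▸ hb')
    have hprop : ({a, b} : Set X) ≠ Set.univ := by
      intro h
      have hUb : U = {b} := by
        apply Set.eq_singleton_iff_unique_mem.mpr
        refine ⟨hb', fun x hx => ?_⟩
        have hx2 : x ∈ ({a, b} : Set X) := h ▸ Set.mem_univ x
        rcases hx2 with h1 | h2
        · exact absurd (h1 ▸ hx) haU
        · exact h2
      exact hb b hba (hUb ▸ hU)
    have hne : ({a, b} : Set X).Nonempty := ⟨a, Or.inl rfl⟩
    have hxor := hdoor {a, b} hne hprop
    have hclosed : IsClosed ({a, b} : Set X) := by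
      rcases hxor with ⟨ho, _⟩ | ⟨hc, _⟩
      · exfalso
        have hsing : IsOpen ({b} : Set X) := by
          have hint : ({a, b} : Set X) ∩ U = {b} := by
            ext x
            constructor
            · rintro ⟨h1 | h1, h2⟩
              · exact absurd (h1 ▸ h2) haU
              · exact h1
            · rintro rfl; exact ⟨Or.inr rfl, hb'⟩
          exact hint ▸ ho.inter hU
        exact hb b hba hsing
      · exact hc
    have hO : IsOpen (({a, b} : Set X)ᶜ) := hclosed.isOpen_compl
    have hcompl : U ∪ (({a, b} : Set X)ᶜ) = ({a} : Set X)ᶜ := by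
      ext x
      simp only [Set.mem_union, Set.mem_compl_iff, Set.mem_insert_iff,
        Set.mem_singleton_iff]
      constructor
      · rintro (h | h)
        · exact fun hx => haU (hx ▸ h)
        · tauto
      · intro hx
        by_cases hxb : x = b
        · exact Or.inl (hxb ▸ hb')
        · exact Or.inr (by tauto)
    have hopen : IsOpen (({a} : Set X)ᶜ) := hcompl ▸ hU.union hO
    have hxa := hdoor (({a} : Set X)ᶜ) ⟨b, fun h => hba h⟩ (by
      intro h
      have : a ∈ ({a} : Set X)ᶜ := h ▸ Set.mem_univ a
      exact this rfl)
    rcases hxa with ⟨_, hnc⟩ | ⟨_, hno⟩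
    · exact hnc (isClosed_compl_iff.mpr ha)
    · exact hno hopen
  ext A
  simp only [Set.mem_setOf_eq, Set.mem_union, Set.mem_singleton_iff]
  constructor
  · intro hA
    rcases A.eq_empty_or_nonempty with rfl | hne
    · exact Or.inr rfl
    · exact Or.inl (key A hA hne)
  · rintro (haA | rfl)
    · rcases eq_or_ne A Set.univ with rfl | hAu
      · exact isOpen_univ
      · rcases hdoor A ⟨a, haA⟩ hAu with ⟨ho, _⟩ | ⟨hc, _⟩
        · exact ho
        · exact absurd haA (key Aᶜ hc.isOpen_compl (Set.nonempty_compl.mpr hAu))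
    · exact isOpen_empty
end

section
/- Let (X, 𝒯) be a connected door space with at least two points, i.e., a topological space in which every proper nonempty subset of X is either open or closed, but not both. If every singleton of X is closed (i.e., X is a T1 space), then 𝒯 \ {∅} is a free ultrafilter on X, that is, an ultrafilter on X containing no finite set. -/
/-- A family of subsets of `X` is an ultrafilter (as a family of sets). -/
def IsUltrafilterFamily {X : Type*} (F : Set (Set X)) : Prop :=
  ∅ ∉ F ∧ Set.univ ∈ F ∧
  (∀ A ∈ F, ∀ B ∈ F, A ∩ B ∈ F) ∧
  (∀ A ∈ F, ∀ B : Set X, A ⊆ B → B ∈ F) ∧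
  (∀ A : Set X, A ∈ F ∨ Aᶜ ∈ F)

/-- a T1 connected door space with at least two points has
`𝒯 \ {∅}` a free ultrafilter (an ultrafilter containing no finite set). -/
theorem stmt_5 {X : Type*} [TopologicalSpace X]
    (hX : ∃ x y : X, x ≠ y)
    (hdoor : ∀ A : Set X, A.Nonempty → A ≠ Set.univ → Xor' (IsOpen A) (IsClosed A))
    (hT1 : ∀ x : X, IsClosed ({x} : Set X)) :
    IsUltrafilterFamily ({A : Set X | IsOpen A} \ {∅}) ∧
      ∀ A ∈ {A : Set X | IsOpen A} \ {∅}, ¬ A.Finite := by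
  obtain ⟨x₀, y₀, hxy⟩ := hX
  haveI : T1Space X := ⟨hT1⟩
  have notboth : ∀ A : Set X, A.Nonempty → A ≠ Set.univ → IsOpen A → IsClosed A → False := by
    intro A h1 h2 hO hC
    rcases hdoor A h1 h2 with ⟨_, h⟩ | ⟨_, h⟩ <;> exact h ‹_›
  have hsing_ne : ∀ x : X, ({x} : Set X) ≠ Set.univ := by
    intro x h
    have h1 : x₀ ∈ ({x} : Set X) := h ▸ Set.mem_univ x₀
    have h2 : y₀ ∈ ({x} : Set X) := h ▸ Set.mem_univ y₀
    exact hxy ((Set.mem_singleton_iff.mp h1).trans (Set.mem_singleton_iff.mp h2).symm)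
  have key : ∀ U V : Set X, IsOpen U → IsOpen V → U.Nonempty → V.Nonempty →
      (U ∩ V).Nonempty := by
    intro U V hU hV hUne hVne
    by_contra h
    have hdisj : U ∩ V = ∅ := Set.not_nonempty_iff_eq_empty.mp h
    obtain ⟨u, hu⟩ := hUne
    obtain ⟨v, hv⟩ := hVne
    have hUV : ∀ a ∈ U, a ∉ V := by
      intro a ha hav
      have : a ∈ U ∩ V := ⟨ha, hav⟩
      rw [hdisj] at this
      exact this
    have hUuniv : U ≠ Set.univ := fun h => hUV v (h ▸ Set.mem_univ v) hv
    have hVuniv : V ≠ Set.univ := fun h => (hUV u hu) (h ▸ Set.mem_univ u)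
    have hU2 : ∃ u' ∈ U, u' ≠ u := by
      by_contra h'
      push_neg at h'
      have hUs : U = {u} := Set.eq_singleton_iff_unique_mem.mpr ⟨hu, h'⟩
      exact notboth U ⟨u, hu⟩ hUuniv hU (hUs ▸ hT1 u)
    obtain ⟨u', hu', huu'⟩ := hU2
    set D := insert u V with hD
    have hDne : D.Nonempty := ⟨u, Set.mem_insert _ _⟩
    have hDuniv : D ≠ Set.univ := by
      intro hEq
      have : u' ∈ D := hEq ▸ Set.mem_univ u'
      rcases this with h' | h'
      · exact huu' h'
      · exact hUV u' hu' h'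
    have hDnotopen : ¬ IsOpen D := by
      intro hDo
      have hDU : D ∩ U = {u} := by
        ext a
        simp only [Set.mem_inter_iff, Set.mem_insert_iff, Set.mem_singleton_iff]
        constructor
        · rintro ⟨h1 | h1, h2⟩
          · exact h1
          · exact absurd h1 (hUV a h2)
        · rintro rfl; exact ⟨Or.inl rfl, hu⟩
      have hso : IsOpen ({u} : Set X) := hDU ▸ hDo.inter hU
      exact notboth {u} ⟨u, rfl⟩ (hsing_ne u) hso (hT1 u)
    have hDclosed : IsClosed D := by
      rcases hdoor D hDne hDuniv with ⟨hO, _⟩ | ⟨hC, _⟩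
      · exact absurd hO hDnotopen
      · exact hC
    have hclV : closure V ⊆ D := closure_minimal (Set.subset_insert u V) hDclosed
    have hVnotcl : ¬ IsClosed V := fun hC => notboth V ⟨v, hv⟩ hVuniv hV hC
    have humem : u ∈ closure V := by
      have hne : closure V ≠ V := fun hEq => hVnotcl (hEq ▸ isClosed_closure)
      obtain ⟨a, ha, hav⟩ :=
        Set.exists_of_ssubset (HasSubset.Subset.ssubset_of_ne subset_closure hne.symm)
      rcases hclV ha with h' | h'
      · exact h' ▸ ha
      · exact absurd h' hav
    obtain ⟨a, ha⟩ := mem_closure_iff.mp humem U hU hu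
    exact h ⟨a, ha⟩
  have hmemF : ∀ A : Set X, A ∈ ({A : Set X | IsOpen A} \ {∅}) ↔ IsOpen A ∧ A.Nonempty := by
    intro A
    simp [Set.mem_diff, Set.nonempty_iff_ne_empty]
  constructor
  · refine ⟨?_, ?_, ?_, ?_, ?_⟩
    · simp [Set.mem_diff]
    · exact (hmemF _).mpr ⟨isOpen_univ, ⟨x₀, trivial⟩⟩
    · intro A hA B hB
      obtain ⟨hAo, hAne⟩ := (hmemF A).mp hA
      obtain ⟨hBo, hBne⟩ := (hmemF B).mp hB
      exact (hmemF _).mpr ⟨hAo.inter hBo, key A B hAo hBo hAne hBne⟩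
    · intro A hA B hAB
      obtain ⟨hAo, hAne⟩ := (hmemF A).mp hA
      have hBne : B.Nonempty := hAne.mono hAB
      refine (hmemF _).mpr ⟨?_, hBne⟩
      by_cases hBu : B = Set.univ
      · exact hBu ▸ isOpen_univ
      rcases hdoor B hBne hBu with ⟨hO, _⟩ | ⟨hC, _⟩
      · exact hO
      · exfalso
        have hBc : Bᶜ.Nonempty := by
          rw [Set.nonempty_compl]; exact hBu
        obtain ⟨a, ha⟩ := key A Bᶜ hAo hC.isOpen_compl hAne hBc
        exact ha.2 (hAB ha.1)
    · intro A
      by_cases hAe : A = ∅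
      · right
        refine (hmemF _).mpr ⟨?_, ?_⟩ <;> simp [hAe]
        exact ⟨x₀, trivial⟩
      by_cases hAu : A = Set.univ
      · left; exact (hmemF _).mpr ⟨hAu ▸ isOpen_univ, Set.nonempty_iff_ne_empty.mpr hAe⟩
      rcases hdoor A (Set.nonempty_iff_ne_empty.mpr hAe) hAu with ⟨hO, _⟩ | ⟨hC, _⟩
      · left; exact (hmemF _).mpr ⟨hO, Set.nonempty_iff_ne_empty.mpr hAe⟩
      · right
        refine (hmemF _).mpr ⟨hC.isOpen_compl, ?_⟩
        rw [Set.nonempty_compl]; exact hAu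
  · intro A hA hfin
    obtain ⟨hAo, hAne⟩ := (hmemF A).mp hA
    by_cases hAu : A = Set.univ
    · have hfinU : (Set.univ : Set X).Finite := hAu ▸ hfin
      have h1 : IsClosed ({x₀}ᶜ : Set X) := (hfinU.subset (Set.subset_univ _)).isClosed
      have h2 : IsOpen ({x₀} : Set X) := by simpa using h1.isOpen_compl
      exact notboth {x₀} ⟨x₀, rfl⟩ (hsing_ne x₀) h2 (hT1 x₀)
    · exact notboth A hAne hAu hAo hfin.isClosed
end

section
/- Let (X, 𝒯) be a connected door space, i.e., a topological space in which every proper nonempty subset of X is either open or closed, but not both. If every singleton of X is closed (i.e., X is a T1 space), then any two nonempty open subsets of X have nonempty intersection (i.e., X is hyperconnected). -/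
/-- in a T1 connected door space, any two nonempty open sets intersect. -/
theorem stmt_6 {X : Type*} [TopologicalSpace X]
    (hdoor : ∀ A : Set X, A.Nonempty → A ≠ Set.univ → Xor' (IsOpen A) (IsClosed A))
    (hT1 : ∀ x : X, IsClosed ({x} : Set X)) :
    ∀ U V : Set X, IsOpen U → IsOpen V → U.Nonempty → V.Nonempty →
      (U ∩ V).Nonempty := by
  intro U V hU hV hUne hVne
  by_contra hcon
  rw [Set.not_nonempty_iff_eq_empty] at hcon
  obtain ⟨x, hx⟩ := hUne
  obtain ⟨y, hy⟩ := hVne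
  have hdisj : ∀ z, z ∈ U → z ∈ V → False := by
    intro z h1 h2
    have : z ∈ U ∩ V := ⟨h1, h2⟩
    rw [hcon] at this
    exact this
  have hxy : x ≠ y := fun h => hdisj x hx (h ▸ hy)
  -- no singleton is open
  have hsing : ∀ z : X, ({z} : Set X) ≠ Set.univ → ¬ IsOpen ({z} : Set X) := by
    intro z hz ho
    rcases hdoor {z} ⟨z, rfl⟩ hz with ⟨_, hc⟩ | ⟨_, ho'⟩
    · exact hc (hT1 z)
    · exact ho' ho
  have hyprop : ({y} : Set X) ≠ Set.univ := by
    intro h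
    have : x ∈ ({y} : Set X) := h ▸ Set.mem_univ x
    exact hxy this
  have hxprop : ({x} : Set X) ≠ Set.univ := by
    intro h
    have : y ∈ ({x} : Set X) := h ▸ Set.mem_univ y
    exact hxy this.symm
  have hynotopen := hsing y hyprop
  have hxnotopen := hsing x hxprop
  -- D := U ∪ {y} is closed
  have hDclosed : IsClosed (U ∪ {y}) := by
    have hDprop : U ∪ {y} ≠ Set.univ := by
      intro h
      have hVy : V = {y} := by
        apply Set.eq_singleton_iff_nonempty_unique_mem.mpr
        refine ⟨⟨y, hy⟩, fun v hv => ?_⟩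
        have : v ∈ U ∪ {y} := h ▸ Set.mem_univ v
        rcases this with h1 | h1
        · exact absurd hv (fun hv' => hdisj v h1 hv')
        · exact h1
      exact hynotopen (hVy ▸ hV)
    rcases hdoor (U ∪ {y}) ⟨y, Or.inr rfl⟩ hDprop with ⟨ho, _⟩ | ⟨hc, _⟩
    · exfalso
      apply hynotopen
      have : (U ∪ {y}) ∩ V = {y} := by
        ext z
        constructor
        · rintro ⟨(h1 | h1), h2⟩
          · exact absurd h2 (fun h2' => hdisj z h1 h2')
          · exact h1
        · rintro rfl; exact ⟨Or.inr rfl, hy⟩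
      exact this ▸ ho.inter hV
    · exact hc
  -- E := V ∪ {x} is closed
  have hEclosed : IsClosed (V ∪ {x}) := by
    have hEprop : V ∪ {x} ≠ Set.univ := by
      intro h
      have hUx : U = {x} := by
        apply Set.eq_singleton_iff_nonempty_unique_mem.mpr
        refine ⟨⟨x, hx⟩, fun v hv => ?_⟩
        have : v ∈ V ∪ {x} := h ▸ Set.mem_univ v
        rcases this with h1 | h1
        · exact absurd hv (fun hv' => hdisj v hv' h1)
        · exact h1
      exact hxnotopen (hUx ▸ hU)
    rcases hdoor (V ∪ {x}) ⟨x, Or.inr rfl⟩ hEprop with ⟨ho, _⟩ | ⟨hc, _⟩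
    · exfalso
      apply hxnotopen
      have : (V ∪ {x}) ∩ U = {x} := by
        ext z
        constructor
        · rintro ⟨(h1 | h1), h2⟩
          · exact absurd h2 (fun h2' => hdisj z h2' h1)
          · exact h1
        · rintro rfl; exact ⟨Or.inr rfl, hx⟩
      exact this ▸ ho.inter hU
    · exact hc
  -- U ∪ V is clopen
  have hUVeq : (U ∪ {y}) ∪ (V ∪ {x}) = U ∪ V := by
    ext z
    constructor
    · rintro ((h | h) | (h | h))
      · exact Or.inl h
      · exact Or.inr (h ▸ hy)
      · exact Or.inr h
      · exact Or.inl (h ▸ hx)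
    · rintro (h | h)
      · exact Or.inl (Or.inl h)
      · exact Or.inr (Or.inl h)
  have hUVclosed : IsClosed (U ∪ V) := hUVeq ▸ hDclosed.union hEclosed
  have hUVopen : IsOpen (U ∪ V) := hU.union hV
  by_cases huniv : U ∪ V = Set.univ
  · -- then U is clopen, proper, nonempty
    have hUclosed : IsClosed U := by
      rw [← isOpen_compl_iff]
      have : Uᶜ = V := by
        ext z
        constructor
        · intro hz
          have : z ∈ U ∪ V := huniv ▸ Set.mem_univ z
          rcases this with h | h
          · exact absurd h hz
          · exact h
        · intro hz hz'
          exact hdisj z hz' hz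
      exact this ▸ hV
    have hUprop : U ≠ Set.univ := by
      intro h
      exact hdisj y (h ▸ Set.mem_univ y) hy
    rcases hdoor U ⟨x, hx⟩ hUprop with ⟨_, hc⟩ | ⟨_, ho⟩
    · exact hc hUclosed
    · exact ho hU
  · rcases hdoor (U ∪ V) ⟨x, Or.inl hx⟩ huniv with ⟨_, hc⟩ | ⟨_, ho⟩
    · exact hc hUVclosed
    · exact ho hUVopen
end

section
/- Let X be a set with at least three points and let z₁ ≠ z₂ be two complex numbers. Let f be a function from the nonempty subsets of X to {z₁, z₂} that is surjective onto {z₁, z₂} and satisfies f(A) + f(B) = f(A ∪ B) for all nonempty subsets A, B of X with A ∩ B = ∅. Then 0 ∈ {z₁, z₂}; the family 𝓕 = {A ⊆ X : A ≠ ∅ and f(A) = f(X)} is an ultrafilter on X; and {∅} ∪ 𝓕 is a connected door topology on X, i.e., a topology in which every proper nonempty subset of X is either open or closed, but not both. -/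
/-- A family of subsets of `X` is a topology (as a family of sets). -/
def IsTopologyFamily {X : Type*} (T : Set (Set X)) : Prop :=
  ∅ ∈ T ∧ Set.univ ∈ T ∧
  (∀ A ∈ T, ∀ B ∈ T, A ∩ B ∈ T) ∧
  (∀ S : Set (Set X), S ⊆ T → ⋃₀ S ∈ T)

/-- A connected door topology: a topology in which every proper nonempty subset is
either open or closed, but not both. -/
def IsConnectedDoorTopology {X : Type*} (T : Set (Set X)) : Prop :=
  IsTopologyFamily T ∧
  ∀ A : Set X, A.Nonempty → A ≠ Set.univ → Xor' (A ∈ T) (Aᶜ ∈ T)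

lemma aux_pair {X : Type*} (f : Set X → ℂ) (z z' : ℂ) (hz0 : z ≠ 0)
    (hrange : ∀ A : Set X, A.Nonempty → f A = z ∨ f A = z')
    (hadd : ∀ A B : Set X, A.Nonempty → B.Nonempty → A ∩ B = ∅ →
      f A + f B = f (A ∪ B))
    {x y o : X} (hxy : x ≠ y) (hxo : x ≠ o) (hyo : y ≠ o)
    (hfx : f {x} = z) (hfy : f {y} = z) : False := by
  have d1 : ({x} : Set X) ∩ {y} = ∅ :=
    Set.singleton_inter_eq_empty.mpr (by simpa using hxy)
  have dxo : ({x} : Set X) ∩ {o} = ∅ :=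
    Set.singleton_inter_eq_empty.mpr (by simpa using hxo)
  have dyo : ({y} : Set X) ∩ {o} = ∅ :=
    Set.singleton_inter_eq_empty.mpr (by simpa using hyo)
  have d2 : (({x} : Set X) ∪ {y}) ∩ {o} = ∅ := by
    rw [Set.union_inter_distrib_right, dxo, dyo, Set.union_empty]
  have hne : (({x} : Set X) ∪ {y}).Nonempty := ⟨x, Or.inl rfl⟩
  have h1 := hadd {x} {y} (Set.singleton_nonempty x) (Set.singleton_nonempty y) d1
  have h2 : f ({x} ∪ {y}) = z + z := by rw [← h1, hfx, hfy]
  have hz' : z' = z + z := by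
    rcases hrange _ hne with h | h
    · exact absurd (by linear_combination h2.symm.trans h) hz0
    · rw [← h, h2]
  have h3 := hadd ({x} ∪ {y}) {o} hne (Set.singleton_nonempty o) d2
  have hbig : f (({x} ∪ {y}) ∪ {o}) = z + z + f {o} := by rw [← h3, h2]
  have hneb : ((({x} : Set X) ∪ {y}) ∪ {o}).Nonempty := ⟨x, Or.inl (Or.inl rfl)⟩
  apply hz0
  rcases hrange {o} (Set.singleton_nonempty o) with ho | ho <;>
    rcases hrange _ hneb with ht | ht <;> rw [ho] at hbig
  · linear_combination (hbig.symm.trans ht) / 2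
  · linear_combination hbig.symm.trans (ht.trans hz')
  · rw [hz'] at hbig
    linear_combination (hbig.symm.trans ht) / 3
  · rw [hz'] at hbig
    linear_combination (hbig.symm.trans (ht.trans hz')) / 2

lemma main_lemma {X : Type*} (f : Set X → ℂ) (w : ℂ) (hw : w ≠ 0)
    (hX : (Set.univ : Set X).Nonempty)
    (hvals : ∀ A : Set X, A.Nonempty → f A = 0 ∨ f A = w)
    (hs : ∃ A : Set X, A.Nonempty ∧ f A = w)
    (hadd : ∀ A B : Set X, A.Nonempty → B.Nonempty → A ∩ B = ∅ →
      f A + f B = f (A ∪ B)) :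
    IsUltrafilterFamily {A : Set X | A.Nonempty ∧ f A = f Set.univ} ∧
    IsConnectedDoorTopology
      ({∅} ∪ {A : Set X | A.Nonempty ∧ f A = f Set.univ}) := by
  -- f univ = w
  have huniv : f Set.univ = w := by
    rcases hvals Set.univ hX with h0 | h0
    · exfalso
      obtain ⟨A, hA, hfA⟩ := hs
      have hAu : A ≠ Set.univ := by
        rintro rfl; rw [h0] at hfA; exact hw hfA.symm
      have hAc : Aᶜ.Nonempty := Set.nonempty_compl.mpr hAu
      have h := hadd A Aᶜ hA hAc (Set.inter_compl_self A)
      rw [Set.union_compl_self, h0, hfA] at h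
      rcases hvals Aᶜ hAc with h2 | h2 <;> rw [h2] at h
      · exact hw (by linear_combination h)
      · exact hw (by linear_combination h / 2)
    · exact h0
  have hdisj : ∀ A B : Set X, A.Nonempty → B.Nonempty → A ∩ B = ∅ →
      f A = w → f B = w → False := by
    intro A B hA hB hAB hfA hfB
    have h := hadd A B hA hB hAB
    rw [hfA, hfB] at h
    rcases hvals _ hA.inl with h0 | h0 <;> rw [h0] at h
    · exact hw (by linear_combination h / 2)
    · exact hw (by linear_combination h)
  have hup : ∀ A B : Set X, A.Nonempty → f A = w → A ⊆ B → f B = w := by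
    intro A B hA hfA hAB
    by_cases h : (B \ A).Nonempty
    · have hd : A ∩ (B \ A) = ∅ := Set.inter_diff_self A B
      have h2 := hadd A (B \ A) hA h hd
      rw [Set.union_diff_cancel hAB, hfA] at h2
      rcases hvals _ h with h0 | h0 <;> rw [h0] at h2
      · linear_combination -h2
      · exfalso
        rcases hvals B (hA.mono hAB) with hb | hb <;> rw [hb] at h2
        · exact hw (by linear_combination h2 / 2)
        · exact hw (by linear_combination h2)
    · have hba : B = A :=
        Set.Subset.antisymm
          (by rwa [Set.not_nonempty_iff_eq_empty, Set.diff_eq_empty] at h) hAB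
      rw [hba]; exact hfA
  have hcompl : ∀ A : Set X, A.Nonempty → Aᶜ.Nonempty →
      (f A = w ∧ f Aᶜ = 0) ∨ (f A = 0 ∧ f Aᶜ = w) := by
    intro A hA hAc
    have h := hadd A Aᶜ hA hAc (Set.inter_compl_self A)
    rw [Set.union_compl_self, huniv] at h
    rcases hvals A hA with h1 | h1 <;> rcases hvals Aᶜ hAc with h2 | h2
    · exfalso; rw [h1, h2] at h; exact hw (by linear_combination -h)
    · exact Or.inr ⟨h1, h2⟩
    · exact Or.inl ⟨h1, h2⟩
    · exfalso; rw [h1, h2] at h; exact hw (by linear_combination h)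
  have hinter : ∀ A B : Set X, A.Nonempty → f A = w → B.Nonempty → f B = w →
      (A ∩ B).Nonempty ∧ f (A ∩ B) = w := by
    intro A B hA hfA hB hfB
    have hne : (A ∩ B).Nonempty := by
      by_contra h
      rw [Set.not_nonempty_iff_eq_empty] at h
      exact hdisj A B hA hB h hfA hfB
    refine ⟨hne, ?_⟩
    rcases hvals _ hne with h0 | h0
    · exfalso
      by_cases h : (A \ B).Nonempty
      · have hd : (A ∩ B) ∩ (A \ B) = ∅ := by
          ext t; simp only [Set.mem_inter_iff, Set.mem_diff, Set.mem_empty_iff_false,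
            iff_false, not_and]; tauto
        have h2 := hadd _ _ hne h hd
        rw [Set.inter_union_diff, h0, hfA] at h2
        have hfd : f (A \ B) = w := by linear_combination h2
        exact hdisj _ B h hB (Set.diff_inter_self) hfd hfB
      · have hsub : A ⊆ B := by
          rwa [Set.not_nonempty_iff_eq_empty, Set.diff_eq_empty] at h
        rw [Set.inter_eq_left.mpr hsub, hfA] at h0
        exact hw h0
    · exact h0
  set F : Set (Set X) := {A : Set X | A.Nonempty ∧ f A = f Set.univ} with hF
  have hmemF : ∀ A : Set X, A ∈ F ↔ A.Nonempty ∧ f A = w := by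
    intro A; rw [hF, Set.mem_setOf_eq, huniv]
  constructor
  · refine ⟨?_, ?_, ?_, ?_, ?_⟩
    · intro h; exact Set.not_nonempty_empty ((hmemF ∅).mp h).1
    · exact (hmemF _).mpr ⟨hX, huniv⟩
    · intro A hA B hB
      obtain ⟨hA1, hA2⟩ := (hmemF A).mp hA
      obtain ⟨hB1, hB2⟩ := (hmemF B).mp hB
      exact (hmemF _).mpr (hinter A B hA1 hA2 hB1 hB2)
    · intro A hA B hAB
      obtain ⟨hA1, hA2⟩ := (hmemF A).mp hA
      exact (hmemF _).mpr ⟨hA1.mono hAB, hup A B hA1 hA2 hAB⟩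
    · intro A
      by_cases hA : A.Nonempty
      · by_cases hAc : Aᶜ.Nonempty
        · rcases hcompl A hA hAc with ⟨h1, _⟩ | ⟨_, h2⟩
          · exact Or.inl ((hmemF _).mpr ⟨hA, h1⟩)
          · exact Or.inr ((hmemF _).mpr ⟨hAc, h2⟩)
        · left
          rw [Set.not_nonempty_iff_eq_empty, Set.compl_empty_iff] at hAc
          rw [hAc]; exact (hmemF _).mpr ⟨hX, huniv⟩
      · right
        rw [Set.not_nonempty_iff_eq_empty] at hA
        rw [hA, Set.compl_empty]
        exact (hmemF _).mpr ⟨hX, huniv⟩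
  · constructor
    · refine ⟨Or.inl rfl, Or.inr ((hmemF _).mpr ⟨hX, huniv⟩), ?_, ?_⟩
      · rintro A (hA | hA) B hB
        · rw [Set.mem_singleton_iff] at hA
          exact Or.inl (by rw [hA, Set.empty_inter]; rfl)
        · rcases hB with hB | hB
          · rw [Set.mem_singleton_iff] at hB
            exact Or.inl (by rw [hB, Set.inter_empty]; rfl)
          · obtain ⟨hA1, hA2⟩ := (hmemF A).mp hA
            obtain ⟨hB1, hB2⟩ := (hmemF B).mp hB
            exact Or.inr ((hmemF _).mpr (hinter A B hA1 hA2 hB1 hB2))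
      · intro S hS
        by_cases h : ∃ A ∈ S, A.Nonempty
        · obtain ⟨A, hAS, hAne⟩ := h
          have hAF : A ∈ F := by
            rcases hS hAS with h' | h'
            · rw [Set.mem_singleton_iff] at h'
              exact absurd (h' ▸ hAne) Set.not_nonempty_empty
            · exact h'
          obtain ⟨hA1, hA2⟩ := (hmemF A).mp hAF
          refine Or.inr ((hmemF _).mpr ⟨hA1.mono (Set.subset_sUnion_of_mem hAS),
            hup A _ hA1 hA2 (Set.subset_sUnion_of_mem hAS)⟩)
        · push_neg at h
          left
          rw [Set.mem_singleton_iff, Set.sUnion_eq_empty]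
          intro s hs
          exact h s hs
    · intro A hAne hAuniv
      have hAc : Aᶜ.Nonempty := Set.nonempty_compl.mpr hAuniv
      rcases hcompl A hAne hAc with ⟨h1, h2⟩ | ⟨h1, h2⟩
      · refine Or.inl ⟨Or.inr ((hmemF _).mpr ⟨hAne, h1⟩), ?_⟩
        rintro (h' | h')
        · rw [Set.mem_singleton_iff] at h'
          exact absurd (h' ▸ hAc) Set.not_nonempty_empty
        · have := ((hmemF _).mp h').2
          rw [h2] at this
          exact hw this.symm
      · refine Or.inr ⟨Or.inr ((hmemF _).mpr ⟨hAc, h2⟩), ?_⟩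
        rintro (h' | h')
        · rw [Set.mem_singleton_iff] at h'
          exact absurd (h' ▸ hAne) Set.not_nonempty_empty
        · have := ((hmemF _).mp h').2
          rw [h1] at this
          exact hw this.symm

/-- if `X` has at least three points, `z₁ ≠ z₂` and
`f : 𝒫(X) \ {∅} → {z₁, z₂}` is surjective and additive on nonempty disjoint sets,
then `0 ∈ {z₁, z₂}`, `f⁻¹(f(X))` is an ultrafilter and `{∅} ∪ f⁻¹(f(X))` is a
connected door topology. -/
theorem stmt_8 {X : Type*} (h3 : ∃ a b c : X, a ≠ b ∧ a ≠ c ∧ b ≠ c)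
    (z₁ z₂ : ℂ) (hz : z₁ ≠ z₂) (f : Set X → ℂ)
    (hrange : ∀ A : Set X, A.Nonempty → f A = z₁ ∨ f A = z₂)
    (hs₁ : ∃ A : Set X, A.Nonempty ∧ f A = z₁)
    (hs₂ : ∃ A : Set X, A.Nonempty ∧ f A = z₂)
    (hadd : ∀ A B : Set X, A.Nonempty → B.Nonempty → A ∩ B = ∅ →
      f A + f B = f (A ∪ B)) :
    (z₁ = 0 ∨ z₂ = 0) ∧
    IsUltrafilterFamily {A : Set X | A.Nonempty ∧ f A = f Set.univ} ∧
    IsConnectedDoorTopology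
      ({∅} ∪ {A : Set X | A.Nonempty ∧ f A = f Set.univ}) := by
  obtain ⟨a, b, c, hab, hac, hbc⟩ := h3
  have hrange' : ∀ A : Set X, A.Nonempty → f A = z₂ ∨ f A = z₁ :=
    fun A hA => (hrange A hA).symm
  have h0 : z₁ = 0 ∨ z₂ = 0 := by
    by_contra h
    push_neg at h
    obtain ⟨h1, h2⟩ := h
    rcases hrange {a} (Set.singleton_nonempty a) with ha | ha <;>
      rcases hrange {b} (Set.singleton_nonempty b) with hb | hb <;>
      rcases hrange {c} (Set.singleton_nonempty c) with hc | hc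
    · exact aux_pair f z₁ z₂ h1 hrange hadd hab hac hbc ha hb
    · exact aux_pair f z₁ z₂ h1 hrange hadd hab hac hbc ha hb
    · exact aux_pair f z₁ z₂ h1 hrange hadd hac hab hbc.symm ha hc
    · exact aux_pair f z₂ z₁ h2 hrange' hadd hbc hab.symm hac.symm hb hc
    · exact aux_pair f z₁ z₂ h1 hrange hadd hbc hab.symm hac.symm hb hc
    · exact aux_pair f z₂ z₁ h2 hrange' hadd hac hab hbc.symm ha hc
    · exact aux_pair f z₂ z₁ h2 hrange' hadd hab hac hbc ha hb
    · exact aux_pair f z₂ z₁ h2 hrange' hadd hab hac hbc ha hb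
  have hX : (Set.univ : Set X).Nonempty := ⟨a, trivial⟩
  refine ⟨h0, ?_⟩
  rcases h0 with h0 | h0
  · have hvals : ∀ A : Set X, A.Nonempty → f A = 0 ∨ f A = z₂ := by
      intro A hA
      rcases hrange A hA with h | h
      · exact Or.inl (h0 ▸ h)
      · exact Or.inr h
    exact main_lemma f z₂ (fun h => hz (h0.trans h.symm)) hX hvals hs₂ hadd
  · have hvals : ∀ A : Set X, A.Nonempty → f A = 0 ∨ f A = z₁ := by
      intro A hA
      rcases hrange A hA with h | h
      · exact Or.inr h
      · exact Or.inl (h0 ▸ h)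
    exact main_lemma f z₁ (fun h => hz (h.trans h0.symm)) hX hvals hs₁ hadd
end

section
/- Let X be a nonempty set and let S be an algebra of subsets of X (a family of subsets containing ∅ and closed under finite unions and complements). Let z₁ ≠ z₂ be two complex numbers and let f be a function from S to {z₁, z₂} that is surjective onto {z₁, z₂} and satisfies f(A) + f(B) = f(A ∪ B) + f(A ∩ B) for all A, B ∈ S. Then: (i) if Y ∈ S with f(Y) = f(∅) and A ∈ S with A ⊆ Y, then f(A) = f(∅); and (ii) if U ∈ S with f(U) = f(X) and V ∈ S with U ⊆ V, then f(V) = f(X). -/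
lemma two_val_aux (z₁ z₂ a b c : ℂ) (hz : z₁ ≠ z₂)
    (ha : a = z₁ ∨ a = z₂) (hb : b = z₁ ∨ b = z₂) (hc : c = z₁ ∨ c = z₂)
    (h : a + b = c + c) : a = c := by
  rcases ha with rfl | rfl <;> rcases hb with rfl | rfl <;> rcases hc with rfl | rfl <;>
    first
      | rfl
      | exact absurd (by linear_combination h) hz
      | exact absurd (by linear_combination -h) hz
      | exact absurd (by linear_combination h/2) hz
      | exact absurd (by linear_combination -h/2) hz

/-- for a two-valued surjection `f` on an algebra of sets `S`
satisfying the valuation equation: (i) subsets (in S) of a set with value `f(∅)`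
have value `f(∅)`; (ii) supersets (in S) of a set with value `f(X)` have value `f(X)`. -/
theorem stmt_10 {X : Type*} [Nonempty X] (S : Set (Set X))
    (hSempty : ∅ ∈ S)
    (hSunion : ∀ A ∈ S, ∀ B ∈ S, A ∪ B ∈ S)
    (hScompl : ∀ A ∈ S, Aᶜ ∈ S)
    (z₁ z₂ : ℂ) (hz : z₁ ≠ z₂) (f : Set X → ℂ)
    (hrange : ∀ A ∈ S, f A = z₁ ∨ f A = z₂)
    (hs₁ : ∃ A ∈ S, f A = z₁) (hs₂ : ∃ A ∈ S, f A = z₂)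
    (hval : ∀ A ∈ S, ∀ B ∈ S, f A + f B = f (A ∪ B) + f (A ∩ B)) :
    (∀ Y ∈ S, f Y = f ∅ → ∀ A ∈ S, A ⊆ Y → f A = f ∅) ∧
    (∀ U ∈ S, f U = f Set.univ → ∀ V ∈ S, U ⊆ V → f V = f Set.univ) := by
  have hSinter : ∀ A ∈ S, ∀ B ∈ S, A ∩ B ∈ S := by
    intro A hA B hB
    have h := hScompl _ (hSunion _ (hScompl A hA) _ (hScompl B hB))
    simpa [Set.compl_union] using h
  have hSuniv : Set.univ ∈ S := by simpa using hScompl ∅ hSempty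
  have part1 : ∀ Y ∈ S, f Y = f ∅ → ∀ A ∈ S, A ⊆ Y → f A = f ∅ := by
    intro Y hY hfY A hA hAY
    have hB : Y ∩ Aᶜ ∈ S := hSinter _ hY _ (hScompl A hA)
    have hU : A ∪ (Y ∩ Aᶜ) = Y := by
      ext x; constructor
      · rintro (h | ⟨h, _⟩); exacts [hAY h, h]
      · intro h; by_cases hx : x ∈ A
        · exact Or.inl hx
        · exact Or.inr ⟨h, hx⟩
    have hI : A ∩ (Y ∩ Aᶜ) = (∅ : Set X) := by
      ext x; simp; tauto
    have h := hval A hA _ hB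
    rw [hU, hI, hfY] at h
    exact two_val_aux z₁ z₂ (f A) (f (Y ∩ Aᶜ)) (f ∅) hz
      (hrange A hA) (hrange _ hB) (hrange _ hSempty) h
  refine ⟨part1, ?_⟩
  intro U hU hfU V hV hUV
  have hUc : Uᶜ ∈ S := hScompl U hU
  have h1 := hval U hU _ hUc
  rw [Set.union_compl_self, Set.inter_compl_self] at h1
  have hfUc : f Uᶜ = f ∅ := by linear_combination h1 - hfU
  have hVUc : V ∩ Uᶜ ∈ S := hSinter _ hV _ hUc
  have hfVUc : f (V ∩ Uᶜ) = f ∅ :=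
    part1 _ hUc hfUc _ hVUc Set.inter_subset_right
  have h2 := hval V hV _ hUc
  have hU2 : V ∪ Uᶜ = Set.univ := by
    ext x; simp; tauto
  rw [hU2, hfVUc, hfUc] at h2
  linear_combination h2
end

section
/- Let X be a nonempty set, let S be an algebra of subsets of X (a family of subsets containing ∅ and closed under finite unions and complements, hence X ∈ S), and let z₁ ≠ z₂ be two complex numbers. For a family 𝓕 ⊆ S, the following are equivalent: (a) 𝓕 is an ultrafilter with respect to S, i.e., ∅ ∉ 𝓕, X ∈ 𝓕, 𝓕 is closed under binary intersection, for any U ∈ 𝓕 and A ∈ S with U ⊆ A one has A ∈ 𝓕, and for every U ∈ S either U ∈ 𝓕 or X \ U ∈ 𝓕; (b) there exists a function f from S to {z₁, z₂}, surjective onto {z₁, z₂}, satisfying f(A) + f(B) = f(A ∪ B) + f(A ∩ B) for all A, B ∈ S, such that 𝓕 = {A ∈ S : f(A) = f(X)}. -/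
/-- `F` is an ultrafilter with respect to the algebra of sets `S`:
`F ⊆ S`, `∅ ∉ F`, `X ∈ F`, `F` is closed under binary intersections and under
supersets lying in `S`, and for every `U ∈ S` either `U ∈ F` or `Uᶜ ∈ F`. -/
def IsUltrafilterWrt {X : Type*} (S F : Set (Set X)) : Prop :=
  F ⊆ S ∧ ∅ ∉ F ∧ Set.univ ∈ F ∧
  (∀ U ∈ F, ∀ V ∈ F, U ∩ V ∈ F) ∧
  (∀ U ∈ F, ∀ A ∈ S, U ⊆ A → A ∈ F) ∧
  (∀ U ∈ S, U ∈ F ∨ Uᶜ ∈ F)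

/-- `F` is an ultrafilter with respect to the algebra `S` iff there is a
two-valued surjection `f : S → {z₁, z₂}` satisfying the valuation equation with
`F = {A ∈ S : f(A) = f(X)}`. -/
theorem stmt_12 {X : Type*} [Nonempty X] (S : Set (Set X))
    (hSempty : ∅ ∈ S)
    (hSunion : ∀ A ∈ S, ∀ B ∈ S, A ∪ B ∈ S)
    (hScompl : ∀ A ∈ S, Aᶜ ∈ S)
    (z₁ z₂ : ℂ) (hz : z₁ ≠ z₂) (F : Set (Set X)) :
    IsUltrafilterWrt S F ↔
      ∃ f : Set X → ℂ,
        (∀ A ∈ S, f A = z₁ ∨ f A = z₂) ∧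
        (∃ A ∈ S, f A = z₁) ∧ (∃ A ∈ S, f A = z₂) ∧
        (∀ A ∈ S, ∀ B ∈ S, f A + f B = f (A ∪ B) + f (A ∩ B)) ∧
        F = {A ∈ S | f A = f Set.univ} := by
  have hSuniv : (Set.univ : Set X) ∈ S := by
    have := hScompl ∅ hSempty
    simpa using this
  have hSinter : ∀ A ∈ S, ∀ B ∈ S, A ∩ B ∈ S := by
    intro A hA B hB
    have : (Aᶜ ∪ Bᶜ)ᶜ ∈ S := hScompl _ (hSunion _ (hScompl _ hA) _ (hScompl _ hB))
    simpa [Set.compl_union] using this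
  have key : ∀ x y w : ℂ, (x = z₁ ∨ x = z₂) → (y = z₁ ∨ y = z₂) → (w = z₁ ∨ w = z₂) →
      x + y = w + w → x = w := by
    rintro x y w (rfl | rfl) (rfl | rfl) (rfl | rfl) h <;>
      first
        | rfl
        | (exfalso; exact hz (by linear_combination h))
        | (exfalso; exact hz (by linear_combination -h))
        | (exfalso; exact hz (by linear_combination h / 2))
        | (exfalso; exact hz (by linear_combination -h / 2))
  constructor
  · rintro ⟨hFS, hFe, hFu, hFi, hFsup, hFdich⟩
    classical
    refine ⟨fun A => if A ∈ F then z₁ else z₂, ?_, ⟨Set.univ, hSuniv, ?_⟩,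
      ⟨∅, hSempty, ?_⟩, ?_, ?_⟩
    · intro A hA; by_cases h : A ∈ F <;> simp [h]
    · simp [hFu]
    · simp [hFe]
    · intro A hA B hB
      by_cases hA' : A ∈ F <;> by_cases hB' : B ∈ F
      · have h1 : A ∪ B ∈ F := hFsup A hA' _ (hSunion A hA B hB) Set.subset_union_left
        have h2 : A ∩ B ∈ F := hFi A hA' B hB'
        simp [hA', hB', h1, h2]
      · have h1 : A ∪ B ∈ F := hFsup A hA' _ (hSunion A hA B hB) Set.subset_union_left
        have h2 : A ∩ B ∉ F := fun h => hB' (hFsup _ h B hB Set.inter_subset_right)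
        simp [hA', hB', h1, h2, add_comm]
      · have h1 : A ∪ B ∈ F := hFsup B hB' _ (hSunion A hA B hB) Set.subset_union_right
        have h2 : A ∩ B ∉ F := fun h => hA' (hFsup _ h A hA Set.inter_subset_left)
        simp [hA', hB', h1, h2, add_comm]
      · have hAc : Aᶜ ∈ F := (hFdich A hA).resolve_left hA'
        have hBc : Bᶜ ∈ F := (hFdich B hB).resolve_left hB'
        have h1 : A ∪ B ∉ F := by
          intro h
          have h3 := hFi _ h _ (hFi _ hAc _ hBc)
          have h4 : (A ∪ B) ∩ (Aᶜ ∩ Bᶜ) = (∅ : Set X) := by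
            ext x; simp; tauto
          rw [h4] at h3
          exact hFe h3
        have h2 : A ∩ B ∉ F := fun h => hA' (hFsup _ h A hA Set.inter_subset_left)
        simp [hA', hB', h1, h2]
    · ext A
      simp only [Set.mem_setOf_eq]
      constructor
      · intro hA
        exact ⟨hFS hA, by simp [hA, hFu]⟩
      · rintro ⟨hAS, hfA⟩
        rw [if_pos hFu] at hfA
        by_contra h
        rw [if_neg h] at hfA
        exact hz hfA.symm
  · rintro ⟨f, hf2, ⟨A₁, hA₁S, hA₁⟩, ⟨A₂, hA₂S, hA₂⟩, hval, rfl⟩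
    have hsum : ∀ A ∈ S, f A + f Aᶜ = f Set.univ + f ∅ := by
      intro A hA
      have := hval A hA Aᶜ (hScompl A hA)
      simpa [Set.union_compl_self, Set.inter_compl_self] using this
    have hne : f ∅ ≠ f Set.univ := by
      intro heq
      have hall : ∀ A ∈ S, f A = f Set.univ := by
        intro A hA
        refine key _ (f Aᶜ) _ (hf2 A hA) (hf2 _ (hScompl A hA)) (hf2 _ hSuniv) ?_
        rw [hsum A hA, heq]
      have e1 : z₁ = f Set.univ := hA₁ ▸ hall A₁ hA₁S
      have e2 : z₂ = f Set.univ := hA₂ ▸ hall A₂ hA₂S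
      exact hz (e1.trans e2.symm)
    have hcompl : ∀ A ∈ S, f A ≠ f Set.univ → f Aᶜ = f Set.univ := by
      intro A hA hAne
      have hAeq : f A = f ∅ := by
        rcases hf2 A hA with h1 | h1 <;> rcases hf2 ∅ hSempty with h2 | h2 <;>
          rcases hf2 _ hSuniv with h3 | h3 <;> simp_all
      have := hsum A hA
      rw [hAeq, add_comm (f Set.univ) (f ∅)] at this
      exact add_left_cancel this
    have hinter : ∀ U ∈ S, f U = f Set.univ → ∀ V ∈ S, f V = f Set.univ →
        f (U ∩ V) = f Set.univ := by
      intro U hU hfU V hV hfV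
      refine key _ (f (U ∪ V)) _ (hf2 _ (hSinter U hU V hV)) (hf2 _ (hSunion U hU V hV))
        (hf2 _ hSuniv) ?_
      have := hval U hU V hV
      rw [hfU, hfV] at this
      linear_combination -this
    refine ⟨fun A hA => hA.1, fun h => hne h.2, ⟨hSuniv, rfl⟩, ?_, ?_, ?_⟩
    · rintro U ⟨hUS, hfU⟩ V ⟨hVS, hfV⟩
      exact ⟨hSinter U hUS V hVS, hinter U hUS hfU V hVS hfV⟩
    · rintro U ⟨hUS, hfU⟩ A hAS hUA
      refine ⟨hAS, ?_⟩
      by_contra hAne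
      have hAc : f Aᶜ = f Set.univ := hcompl A hAS hAne
      have h3 : f (U ∩ Aᶜ) = f Set.univ := hinter U hUS hfU Aᶜ (hScompl A hAS) hAc
      have h4 : U ∩ Aᶜ = (∅ : Set X) := by
        rw [← Set.disjoint_iff_inter_eq_empty]
        exact Set.disjoint_compl_right_iff_subset.mpr hUA
      rw [h4] at h3
      exact hne h3
    · intro U hU
      by_cases h : f U = f Set.univ
      · exact Or.inl ⟨hU, h⟩
      · exact Or.inr ⟨hScompl U hU, hcompl U hU h⟩
end

section
/- Let X be a set with at least four points and let {z₁, z₂, z₃} be a set of three distinct complex numbers. Let f be a function from the nonempty subsets of X to {z₁, z₂, z₃} that is surjective onto {z₁, z₂, z₃} and satisfies f(A) + f(B) = f(A ∪ B) for all nonempty subsets A, B of X with A ∩ B = ∅. Then there exists a nonzero complex number z such that {z₁, z₂, z₃} = {-z, 0, z} or {z₁, z₂, z₃} = {0, z, 2z}. -/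
set_option linter.unreachableTactic false
set_option linter.unusedTactic false


private lemma caseA {X : Type*} (f : Set X → ℂ) (x y : ℂ)
    (hx : x ≠ 0) (hy : y ≠ 0) (hxy : x ≠ y)
    (hr : ∀ A : Set X, A.Nonempty → f A = 0 ∨ f A = x ∨ f A = y)
    (hadd : ∀ A B : Set X, A.Nonempty → B.Nonempty → A ∩ B = ∅ →
      f A + f B = f (A ∪ B))
    (A B : Set X) (hA : A.Nonempty) (hB : B.Nonempty) (hfA : f A = x) (hfB : f B = y) :
    x + y = 0 ∨ y = 2 * x ∨ x = 2 * y := by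
  by_cases hd : A ∩ B = ∅
  · have h := hadd A B hA hB hd
    rw [hfA, hfB] at h
    rcases hr (A ∪ B) hA.inl with h'|h'|h' <;> rw [h'] at h
    · exact Or.inl h
    · exact absurd (by linear_combination h) hy
    · exact absurd (by linear_combination h) hx
  · have hABne : (A ∩ B).Nonempty := Set.nonempty_iff_ne_empty.mpr hd
    by_cases h1 : A \ B = ∅
    · have hAB : A ⊆ B := Set.diff_eq_empty.mp h1
      by_cases h2 : B \ A = ∅
      · have hE : A = B := Set.Subset.antisymm hAB (Set.diff_eq_empty.mp h2)
        exact absurd (by rw [← hfA, ← hfB, hE]) hxy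
      · have hBA : (B \ A).Nonempty := Set.nonempty_iff_ne_empty.mpr h2
        have hu := hadd (B \ A) A hBA hA (by ext z; simp)
        rw [Set.diff_union_of_subset hAB, hfA, hfB] at hu
        rcases hr (B \ A) hBA with h'|h'|h' <;> rw [h'] at hu
        · exact absurd (by linear_combination hu) hxy
        · exact Or.inr (Or.inl (by linear_combination -hu))
        · exact absurd (by linear_combination hu) hx
    · have hAd : (A \ B).Nonempty := Set.nonempty_iff_ne_empty.mpr h1
      by_cases h2 : B \ A = ∅
      · have hBA : B ⊆ A := Set.diff_eq_empty.mp h2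
        have hu := hadd (A \ B) B hAd hB (by ext z; simp)
        rw [Set.diff_union_of_subset hBA, hfA, hfB] at hu
        rcases hr (A \ B) hAd with h'|h'|h' <;> rw [h'] at hu
        · exact absurd (by linear_combination -hu) hxy
        · exact absurd (by linear_combination hu) hy
        · exact Or.inr (Or.inr (by linear_combination -hu))
      · have hBd : (B \ A).Nonempty := Set.nonempty_iff_ne_empty.mpr h2
        have ha := hadd (A \ B) (A ∩ B) hAd hABne (by ext z; simp; tauto)
        rw [Set.diff_union_inter, hfA] at ha
        have hb := hadd (B \ A) (B ∩ A) hBd (by rwa [Set.inter_comm]) (by ext z; simp; tauto)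
        rw [Set.diff_union_inter, hfB, Set.inter_comm B A] at hb
        have hab := hadd (A \ B) (B \ A) hAd hBd (by ext z; simp; tauto)
        rcases hr (A ∩ B) hABne with hc|hc|hc <;> rw [hc] at ha hb
        · rcases hr ((A \ B) ∪ (B \ A)) hAd.inl with h'|h'|h' <;> rw [h'] at hab
          · exact Or.inl (by linear_combination hab - ha - hb)
          · exact absurd (by linear_combination hab - ha - hb) hy
          · exact absurd (by linear_combination hab - ha - hb) hx
        · rcases hr (B \ A) hBd with h'|h'|h' <;> rw [h'] at hb
          · exact absurd (by linear_combination hb) hxy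
          · exact Or.inr (Or.inl (by linear_combination -hb))
          · exact absurd (by linear_combination hb) hx
        · rcases hr (A \ B) hAd with h'|h'|h' <;> rw [h'] at ha
          · exact absurd (by linear_combination -ha) hxy
          · exact absurd (by linear_combination ha) hy
          · exact Or.inr (Or.inr (by linear_combination -ha))


private lemma caseB {X : Type*} (f : Set X → ℂ) (v t : ℂ)
    (hv : v ≠ 0) (htv : t ≠ v) (ht2 : t ≠ 2 * v)
    (p q r s : X) (hpq : p ≠ q) (hpr : p ≠ r) (hps : p ≠ s)
    (hqr : q ≠ r) (hqs : q ≠ s) (hrs : r ≠ s)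
    (hr : ∀ A : Set X, A.Nonempty → f A = v ∨ f A = 2 * v ∨ f A = t)
    (hfp : f ({p} : Set X) = v) (hfq : f ({q} : Set X) = v)
    (hadd : ∀ A B : Set X, A.Nonempty → B.Nonempty → A ∩ B = ∅ →
      f A + f B = f (A ∪ B)) : t = 0 := by
  have np : ({p} : Set X).Nonempty := Set.singleton_nonempty p
  have nq : ({q} : Set X).Nonempty := Set.singleton_nonempty q
  have nr : ({r} : Set X).Nonempty := Set.singleton_nonempty r
  have ns : ({s} : Set X).Nonempty := Set.singleton_nonempty s
  have dpq : ({p} : Set X) ∩ {q} = ∅ := by ext z; simp; aesop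
  have dpr : ({p} : Set X) ∩ {r} = ∅ := by ext z; simp; aesop
  have dps : ({p} : Set X) ∩ {s} = ∅ := by ext z; simp; aesop
  have dpqr : (({p} ∪ {q}) ∩ {r} : Set X) = ∅ := by ext z; simp; aesop
  have dpqs : (({p} ∪ {q}) ∩ {s} : Set X) = ∅ := by ext z; simp; aesop
  have dpqrs : ((({p} ∪ {q}) ∪ {r}) ∩ {s} : Set X) = ∅ := by ext z; simp; aesop
  have h2 : f ({p} ∪ {q} : Set X) = 2 * v := by
    rw [← hadd {p} {q} np nq dpq, hfp, hfq]; ring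
  rcases hr {r} nr with hwr|hwr|hwr
  · -- f {r} = v : then t = 3v, contradictions via s
    have h3 : f (({p} ∪ {q}) ∪ {r} : Set X) = 2 * v + v := by
      rw [← hadd _ {r} np.inl nr dpqr, h2, hwr]
    have ht3 : t = 2 * v + v := by
      rcases hr (({p} ∪ {q}) ∪ {r}) np.inl.inl with h'|h'|h' <;> rw [h'] at h3
      · exact absurd (by linear_combination -h3 / 2) hv
      · exact absurd (by linear_combination -h3) hv
      · exact h3
    rcases hr {s} ns with hws|hws|hws
    · have h4 : f ((({p} ∪ {q}) ∪ {r}) ∪ {s} : Set X) = 2 * v + v + v := by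
        rw [← hadd _ {s} np.inl.inl ns dpqrs, h3, hws]
      rcases hr ((({p} ∪ {q}) ∪ {r}) ∪ {s}) np.inl.inl.inl with h'|h'|h' <;>
        rw [h'] at h4
      · exact absurd (by linear_combination -h4 / 3) hv
      · exact absurd (by linear_combination -h4 / 2) hv
      · rw [ht3] at h4; exact absurd (by linear_combination -h4) hv
    · have h4 : f (({p} ∪ {q}) ∪ {s} : Set X) = 2 * v + 2 * v := by
        rw [← hadd _ {s} np.inl ns dpqs, h2, hws]
      rcases hr (({p} ∪ {q}) ∪ {s}) np.inl.inl with h'|h'|h' <;> rw [h'] at h4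
      · exact absurd (by linear_combination -h4 / 3) hv
      · exact absurd (by linear_combination -h4 / 2) hv
      · rw [ht3] at h4; exact absurd (by linear_combination -h4) hv
    · have h4 : f ({p} ∪ {s} : Set X) = v + t := by
        rw [← hadd {p} {s} np ns dps, hfp, hws]
      rw [ht3] at h4
      rcases hr ({p} ∪ {s}) np.inl with h'|h'|h' <;> rw [h'] at h4
      · exact absurd (by linear_combination -h4 / 3) hv
      · exact absurd (by linear_combination -h4 / 2) hv
      · rw [ht3] at h4; exact absurd (by linear_combination -h4) hv
  · -- f {r} = 2v
    have h3 : f ({p} ∪ {r} : Set X) = v + 2 * v := by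
      rw [← hadd {p} {r} np nr dpr, hfp, hwr]
    have ht3 : t = v + 2 * v := by
      rcases hr ({p} ∪ {r}) np.inl with h'|h'|h' <;> rw [h'] at h3
      · exact absurd (by linear_combination -h3 / 2) hv
      · exact absurd (by linear_combination -h3) hv
      · exact h3
    have h4 : f (({p} ∪ {q}) ∪ {r} : Set X) = 2 * v + 2 * v := by
      rw [← hadd _ {r} np.inl nr dpqr, h2, hwr]
    rcases hr (({p} ∪ {q}) ∪ {r}) np.inl.inl with h'|h'|h' <;> rw [h'] at h4
    · exact absurd (by linear_combination -h4 / 3) hv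
    · exact absurd (by linear_combination -h4 / 2) hv
    · rw [ht3] at h4; exact absurd (by linear_combination -h4) hv
  · -- f {r} = t : v + t ∈ S forces t = 0
    have h3 : f ({p} ∪ {r} : Set X) = v + t := by
      rw [← hadd {p} {r} np nr dpr, hfp, hwr]
    rcases hr ({p} ∪ {r}) np.inl with h'|h'|h' <;> rw [h'] at h3
    · linear_combination -h3
    · exact absurd (by linear_combination -h3) htv
    · exact absurd (by linear_combination -h3) hv


private lemma pigeon4 {a b c d x y z : ℂ}
    (ha : a = x ∨ a = y ∨ a = z) (hb : b = x ∨ b = y ∨ b = z)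
    (hc : c = x ∨ c = y ∨ c = z) (hd : d = x ∨ d = y ∨ d = z) :
    a = b ∨ a = c ∨ a = d ∨ b = c ∨ b = d ∨ c = d := by
  rcases ha with rfl|rfl|rfl <;> rcases hb with rfl|rfl|rfl <;>
    rcases hc with rfl|rfl|rfl <;> rcases hd with rfl|rfl|rfl <;> tauto

private lemma endgame (z₁ z₂ z₃ x y : ℂ)
    (hS : ({z₁, z₂, z₃} : Set ℂ) = ({0, x, y} : Set ℂ))
    (hx : x ≠ 0) (hy : y ≠ 0) (hxy : x ≠ y)
    (hcase : x + y = 0 ∨ y = 2 * x ∨ x = 2 * y) :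
    ∃ z : ℂ, z ≠ 0 ∧
      (({z₁, z₂, z₃} : Set ℂ) = {-z, 0, z} ∨
        ({z₁, z₂, z₃} : Set ℂ) = {0, z, 2 * z}) := by
  rw [hS]
  rcases hcase with h|h|h
  · refine ⟨x, hx, Or.inl ?_⟩
    have hyx : y = -x := by linear_combination h
    subst hyx
    ext w; simp; tauto
  · exact ⟨x, hx, Or.inr (by rw [h])⟩
  · refine ⟨y, hy, Or.inr ?_⟩
    rw [h]; ext w; simp; tauto

private lemma main_core {X : Type*} (f : Set X → ℂ) (z₁ z₂ z₃ : ℂ)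
    (h12 : z₁ ≠ z₂) (h13 : z₁ ≠ z₃) (h23 : z₂ ≠ z₃)
    (hrange : ∀ A : Set X, A.Nonempty → f A = z₁ ∨ f A = z₂ ∨ f A = z₃)
    (hs₁ : ∃ A : Set X, A.Nonempty ∧ f A = z₁)
    (hs₂ : ∃ A : Set X, A.Nonempty ∧ f A = z₂)
    (hs₃ : ∃ A : Set X, A.Nonempty ∧ f A = z₃)
    (hadd : ∀ A B : Set X, A.Nonempty → B.Nonempty → A ∩ B = ∅ →
      f A + f B = f (A ∪ B))
    (p q r s : X) (hpq : p ≠ q) (hpr : p ≠ r) (hps : p ≠ s)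
    (hqr : q ≠ r) (hqs : q ≠ s) (hrs : r ≠ s)
    (hfpq : f ({p} : Set X) = f ({q} : Set X)) :
    ∃ z : ℂ, z ≠ 0 ∧
      (({z₁, z₂, z₃} : Set ℂ) = {-z, 0, z} ∨
        ({z₁, z₂, z₃} : Set ℂ) = {0, z, 2 * z}) := by
  have np : ({p} : Set X).Nonempty := Set.singleton_nonempty p
  have hvmem := hrange {p} np
  by_cases hv0 : f ({p} : Set X) = 0
  · -- 0 is one of the three values
    rcases hvmem with h|h|h
    · have h1 : z₁ = 0 := h.symm.trans hv0
      subst h1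
      obtain ⟨A, hA, hfA⟩ := hs₂
      obtain ⟨B, hB, hfB⟩ := hs₃
      exact endgame 0 z₂ z₃ z₂ z₃ rfl (Ne.symm h12) (Ne.symm h13) h23
        (caseA f z₂ z₃ (Ne.symm h12) (Ne.symm h13) h23 hrange hadd A B hA hB hfA hfB)
    · have h1 : z₂ = 0 := h.symm.trans hv0
      subst h1
      obtain ⟨A, hA, hfA⟩ := hs₁
      obtain ⟨B, hB, hfB⟩ := hs₃
      refine endgame z₁ 0 z₃ z₁ z₃ (by ext w; simp; tauto) h12 (Ne.symm h23) h13
        (caseA f z₁ z₃ h12 (Ne.symm h23) h13 ?_ hadd A B hA hB hfA hfB)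
      intro C hC; have := hrange C hC; tauto
    · have h1 : z₃ = 0 := h.symm.trans hv0
      subst h1
      obtain ⟨A, hA, hfA⟩ := hs₁
      obtain ⟨B, hB, hfB⟩ := hs₂
      refine endgame z₁ z₂ 0 z₁ z₂ (by ext w; simp; tauto) h13 h23 h12
        (caseA f z₁ z₂ h13 h23 h12 ?_ hadd A B hA hB hfA hfB)
      intro C hC; have := hrange C hC; tauto
  · -- v ≠ 0, so 2v ∈ S as well
    have nq : ({q} : Set X).Nonempty := Set.singleton_nonempty q
    have dpq : ({p} : Set X) ∩ {q} = ∅ := by ext z; simp; aesop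
    have h2 : f ({p} ∪ {q} : Set X) = 2 * f ({p} : Set X) := by
      rw [← hadd {p} {q} np nq dpq, ← hfpq]; ring
    have h2mem := hrange ({p} ∪ {q}) np.inl
    rw [h2] at h2mem
    rcases hvmem with h1|h1|h1 <;> rcases h2mem with h2'|h2'|h2'
    · exact absurd (by linear_combination h2' - h1) hv0
    · -- v = z₁, 2v = z₂, t = z₃
      have ht : z₃ = 0 := by
        refine caseB f (f ({p} : Set X)) z₃ hv0 (by rw [h1]; exact h13.symm)
          (by rw [h2']; exact h23.symm) p q r s hpq hpr hps hqr hqs hrs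
          ?_ rfl hfpq.symm hadd
        intro C hC; rcases hrange C hC with h|h|h
        · exact Or.inl (h.trans h1.symm)
        · exact Or.inr (Or.inl (h.trans h2'.symm))
        · exact Or.inr (Or.inr h)
      subst ht
      exact ⟨f {p}, hv0, Or.inr (by rw [← h1, ← h2']; try ext w; first | rfl | (simp only [Set.mem_insert_iff, Set.mem_singleton_iff]; tauto))⟩
    · -- v = z₁, 2v = z₃, t = z₂
      have ht : z₂ = 0 := by
        refine caseB f (f ({p} : Set X)) z₂ hv0 (by rw [h1]; exact h12.symm)
          (by rw [h2']; exact h23) p q r s hpq hpr hps hqr hqs hrs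
          ?_ rfl hfpq.symm hadd
        intro C hC; rcases hrange C hC with h|h|h
        · exact Or.inl (h.trans h1.symm)
        · exact Or.inr (Or.inr h)
        · exact Or.inr (Or.inl (h.trans h2'.symm))
      subst ht
      exact ⟨f {p}, hv0, Or.inr (by rw [← h1, ← h2']; try ext w; first | rfl | (simp only [Set.mem_insert_iff, Set.mem_singleton_iff]; tauto))⟩
    · -- v = z₂, 2v = z₁, t = z₃
      have ht : z₃ = 0 := by
        refine caseB f (f ({p} : Set X)) z₃ hv0 (by rw [h1]; exact h23.symm)
          (by rw [h2']; exact h13.symm) p q r s hpq hpr hps hqr hqs hrs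
          ?_ rfl hfpq.symm hadd
        intro C hC; rcases hrange C hC with h|h|h
        · exact Or.inr (Or.inl (h.trans h2'.symm))
        · exact Or.inl (h.trans h1.symm)
        · exact Or.inr (Or.inr h)
      subst ht
      exact ⟨f {p}, hv0, Or.inr (by rw [← h1, ← h2']; try ext w; first | rfl | (simp only [Set.mem_insert_iff, Set.mem_singleton_iff]; tauto))⟩
    · exact absurd (by linear_combination h2' - h1) hv0
    · -- v = z₂, 2v = z₃, t = z₁
      have ht : z₁ = 0 := by
        refine caseB f (f ({p} : Set X)) z₁ hv0 (by rw [h1]; exact h12)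
          (by rw [h2']; exact h13) p q r s hpq hpr hps hqr hqs hrs
          ?_ rfl hfpq.symm hadd
        intro C hC; rcases hrange C hC with h|h|h
        · exact Or.inr (Or.inr h)
        · exact Or.inl (h.trans h1.symm)
        · exact Or.inr (Or.inl (h.trans h2'.symm))
      subst ht
      exact ⟨f {p}, hv0, Or.inr (by rw [← h1, ← h2']; try ext w; first | rfl | (simp only [Set.mem_insert_iff, Set.mem_singleton_iff]; tauto))⟩
    · -- v = z₃, 2v = z₁, t = z₂
      have ht : z₂ = 0 := by
        refine caseB f (f ({p} : Set X)) z₂ hv0 (by rw [h1]; exact h23)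
          (by rw [h2']; exact h12.symm) p q r s hpq hpr hps hqr hqs hrs
          ?_ rfl hfpq.symm hadd
        intro C hC; rcases hrange C hC with h|h|h
        · exact Or.inr (Or.inl (h.trans h2'.symm))
        · exact Or.inr (Or.inr h)
        · exact Or.inl (h.trans h1.symm)
      subst ht
      exact ⟨f {p}, hv0, Or.inr (by rw [← h1, ← h2']; try ext w; first | rfl | (simp only [Set.mem_insert_iff, Set.mem_singleton_iff]; tauto))⟩
    · -- v = z₃, 2v = z₂, t = z₁
      have ht : z₁ = 0 := by
        refine caseB f (f ({p} : Set X)) z₁ hv0 (by rw [h1]; exact h13)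
          (by rw [h2']; exact h12) p q r s hpq hpr hps hqr hqs hrs
          ?_ rfl hfpq.symm hadd
        intro C hC; rcases hrange C hC with h|h|h
        · exact Or.inr (Or.inr h)
        · exact Or.inr (Or.inl (h.trans h2'.symm))
        · exact Or.inl (h.trans h1.symm)
      subst ht
      exact ⟨f {p}, hv0, Or.inr (by rw [← h1, ← h2']; try ext w; first | rfl | (simp only [Set.mem_insert_iff, Set.mem_singleton_iff]; tauto))⟩
    · exact absurd (by linear_combination h2' - h1) hv0


/-- if `X` has at least four points and `f : 𝒫(X) \ {∅} → {z₁, z₂, z₃}`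
is surjective (with `z₁, z₂, z₃` distinct) and additive on nonempty disjoint sets, then
`{z₁, z₂, z₃} = {-z, 0, z}` or `{0, z, 2z}` for some nonzero complex `z`. -/
theorem stmt_15 {X : Type*}
    (h4 : ∃ a b c d : X, a ≠ b ∧ a ≠ c ∧ a ≠ d ∧ b ≠ c ∧ b ≠ d ∧ c ≠ d)
    (z₁ z₂ z₃ : ℂ) (h12 : z₁ ≠ z₂) (h13 : z₁ ≠ z₃) (h23 : z₂ ≠ z₃)
    (f : Set X → ℂ)
    (hrange : ∀ A : Set X, A.Nonempty → f A = z₁ ∨ f A = z₂ ∨ f A = z₃)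
    (hs₁ : ∃ A : Set X, A.Nonempty ∧ f A = z₁)
    (hs₂ : ∃ A : Set X, A.Nonempty ∧ f A = z₂)
    (hs₃ : ∃ A : Set X, A.Nonempty ∧ f A = z₃)
    (hadd : ∀ A B : Set X, A.Nonempty → B.Nonempty → A ∩ B = ∅ →
      f A + f B = f (A ∪ B)) :
    ∃ z : ℂ, z ≠ 0 ∧
      (({z₁, z₂, z₃} : Set ℂ) = {-z, 0, z} ∨
        ({z₁, z₂, z₃} : Set ℂ) = {0, z, 2 * z}) := by
  obtain ⟨a, b, c, d, hab, hac, had, hbc, hbd, hcd⟩ := h4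
  have ha := hrange {a} (Set.singleton_nonempty a)
  have hb := hrange {b} (Set.singleton_nonempty b)
  have hc := hrange {c} (Set.singleton_nonempty c)
  have hd := hrange {d} (Set.singleton_nonempty d)
  rcases pigeon4 ha hb hc hd with h|h|h|h|h|h
  · exact main_core f z₁ z₂ z₃ h12 h13 h23 hrange hs₁ hs₂ hs₃ hadd
      a b c d hab hac had hbc hbd hcd h
  · exact main_core f z₁ z₂ z₃ h12 h13 h23 hrange hs₁ hs₂ hs₃ hadd
      a c b d hac hab had hbc.symm hcd hbd h
  · exact main_core f z₁ z₂ z₃ h12 h13 h23 hrange hs₁ hs₂ hs₃ hadd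
      a d b c had hab hac hbd.symm hcd.symm hbc h
  · exact main_core f z₁ z₂ z₃ h12 h13 h23 hrange hs₁ hs₂ hs₃ hadd
      b c a d hbc hab.symm hbd hac.symm hcd had h
  · exact main_core f z₁ z₂ z₃ h12 h13 h23 hrange hs₁ hs₂ hs₃ hadd
      b d a c hbd hab.symm hbc had.symm hcd.symm hac h
  · exact main_core f z₁ z₂ z₃ h12 h13 h23 hrange hs₁ hs₂ hs₃ hadd
      c d a b hcd hac.symm hbc.symm had.symm hbd.symm hab h
end

section
/- Let X be a set with at least four points, let z be a nonzero complex number, and let 𝒯 be a topology on X. The following are equivalent: (a) there exists a function f from the nonempty subsets of X to {-z, 0, z}, surjective onto {-z, 0, z}, satisfying f(A) + f(B) = f(A ∪ B) for all nonempty disjoint subsets A, B of X, such that 𝒯 = {∅, X} ∪ {A : A ≠ ∅, f(A) = -z} or 𝒯 = {∅, X} ∪ {A : A ≠ ∅, f(A) = z}; (b) there exist p ∈ X and an ultrafilter 𝓕' on X \ {p} such that 𝒯 = {∅, X} ∪ 𝓕'. -/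
/-- `F` is an ultrafilter on the subset `Y` of `X`: a family of subsets of `Y`
with `∅ ∉ F`, `Y ∈ F`, closed under binary intersections and under supersets
within `Y`, and containing `B` or `Y \ B` for every `B ⊆ Y`. -/
def IsUltrafilterOn {X : Type*} (Y : Set X) (F : Set (Set X)) : Prop :=
  (∀ A ∈ F, A ⊆ Y) ∧ ∅ ∉ F ∧ Y ∈ F ∧
  (∀ A ∈ F, ∀ B ∈ F, A ∩ B ∈ F) ∧
  (∀ A ∈ F, ∀ B : Set X, A ⊆ B → B ⊆ Y → B ∈ F) ∧
  (∀ B : Set X, B ⊆ Y → B ∈ F ∨ Y \ B ∈ F)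

private theorem stmt16_forward_aux {X : Type*} [TopologicalSpace X] (f : Set X → ℂ) (z : ℂ) (hz : z ≠ 0)
    (hval : ∀ A : Set X, A.Nonempty → f A = -z ∨ f A = 0 ∨ f A = z)
    (hneg : ∃ A : Set X, A.Nonempty ∧ f A = -z)
    (hpos : ∃ A : Set X, A.Nonempty ∧ f A = z)
    (hadd : ∀ A B : Set X, A.Nonempty → B.Nonempty → A ∩ B = ∅ →
      f A + f B = f (A ∪ B))
    (htop : {A : Set X | IsOpen A} =
      {∅, Set.univ} ∪ {A : Set X | A.Nonempty ∧ f A = z}) :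
    ∃ p : X, ∃ F : Set (Set X),
      ((∀ A ∈ F, A ⊆ ({p}ᶜ : Set X)) ∧ ∅ ∉ F ∧ ({p}ᶜ : Set X) ∈ F ∧
      (∀ A ∈ F, ∀ B ∈ F, A ∩ B ∈ F) ∧
      (∀ A ∈ F, ∀ B : Set X, A ⊆ B → B ⊆ ({p}ᶜ : Set X) → B ∈ F) ∧
      (∀ B : Set X, B ⊆ ({p}ᶜ : Set X) → B ∈ F ∨ ({p}ᶜ : Set X) \ B ∈ F)) ∧
      {A : Set X | IsOpen A} = {∅, Set.univ} ∪ F := by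
  obtain ⟨B, hB, hfB⟩ := hpos
  obtain ⟨A, hA, hfA⟩ := hneg
  -- no two disjoint nonempty sets both have value z
  have L0 : ∀ C D : Set X, C.Nonempty → D.Nonempty → C ∩ D = ∅ →
      f C = z → f D = z → False := by
    intro C D hC hD hCD h1 h2
    have h3 := hadd C D hC hD hCD
    rw [h1, h2] at h3
    rcases hval (C ∪ D) (hC.mono Set.subset_union_left) with h | h | h <;> rw [h] at h3
    · exact hz (by linear_combination h3/3)
    · exact hz (by linear_combination h3/2)
    · exact hz (by linear_combination h3)
  -- no nonempty subset of a z-set has value -z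
  have L1 : ∀ C : Set X, C ⊆ B → C.Nonempty → f C ≠ -z := by
    intro C hCB hC hfC
    by_cases hCeq : C = B
    · rw [hCeq, hfB] at hfC
      exact hz (by linear_combination hfC/2)
    · have hBC : (B \ C).Nonempty := Set.diff_nonempty.mpr
        (fun h => hCeq (subset_antisymm hCB h))
      have h3 := hadd C (B \ C) hC hBC (by ext x; simp; try tauto)
      rw [Set.union_diff_cancel hCB, hfC, hfB] at h3
      rcases hval (B \ C) hBC with h | h | h <;> rw [h] at h3
      · exact hz (by linear_combination -h3/3)
      · exact hz (by linear_combination -h3/2)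
      · exact hz (by linear_combination -h3)
  -- existence of the point p with f {p} = -z
  have hp : ∃ p : X, f {p} = -z := by
    by_contra hnp
    push_neg at hnp
    have hsing : ∀ x, x ∉ B → f {x} = 0 := by
      intro x hx
      rcases hval {x} (Set.singleton_nonempty x) with h | h | h
      · exact absurd h (hnp x)
      · exact h
      · exact absurd h (fun h => L0 B {x} hB (Set.singleton_nonempty x)
          (Set.inter_singleton_eq_empty.mpr hx) hfB h)
    -- any nonempty proper subset of Bᶜ has value 0
    have hCzero : ∀ C : Set X, C ⊆ Bᶜ → C.Nonempty → C ≠ Bᶜ → f C = 0 := by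
      intro C hCsub hCne hCneq
      have hopen : IsOpen (B ∪ C) := by
        have he : B ∪ C = ⋃ x ∈ C, (B ∪ {x}) := by
          ext y; simp only [Set.mem_union, Set.mem_iUnion, Set.mem_singleton_iff]
          constructor
          · rintro (h | h)
            · obtain ⟨c, hc⟩ := hCne; exact ⟨c, hc, Or.inl h⟩
            · exact ⟨y, h, Or.inr rfl⟩
          · rintro ⟨x, hx, h | rfl⟩
            · exact Or.inl h
            · exact Or.inr hx
        rw [he]
        refine isOpen_biUnion fun x hx => ?_
        have hx' : x ∉ B := hCsub hx
        have hfx : f (B ∪ {x}) = z := by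
          rw [← hadd B {x} hB (Set.singleton_nonempty x)
            (Set.inter_singleton_eq_empty.mpr hx'), hfB, hsing x hx', add_zero]
        have : (B ∪ {x}) ∈ {A : Set X | IsOpen A} := by
          rw [htop]
          exact Or.inr ⟨hB.mono Set.subset_union_left, hfx⟩
        exact this
      have hmem : (B ∪ C) ∈ ({∅, Set.univ} ∪ {A : Set X | A.Nonempty ∧ f A = z}) := by
        rw [← htop]; exact hopen
      rcases hmem with (h | h) | h
      · exact absurd h (hB.mono Set.subset_union_left).ne_empty
      · exfalso
        have hy : (Bᶜ \ C).Nonempty := Set.diff_nonempty.mpr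
          (fun hs => hCneq (subset_antisymm hCsub hs))
        obtain ⟨y, hy1, hy2⟩ := hy
        have : y ∈ B ∪ C := by rw [h]; trivial
        rcases this with h' | h'
        · exact hy1 h'
        · exact hy2 h'
      · have h3 := hadd B C hB hCne (by
          ext x; simp only [Set.mem_inter_iff, Set.mem_empty_iff_false, iff_false, not_and]
          intro hxB hxC; exact hCsub hxC hxB)
        rw [hfB, h.2] at h3
        linear_combination h3
    have hA2 : (A \ B).Nonempty := Set.diff_nonempty.mpr
      (fun h => L1 A h hA hfA)
    -- key contradiction maker
    have key : ∀ A' : Set X, A'.Nonempty → f A' = -z → (A' \ B).Nonempty →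
        f (A' \ B) = 0 → False := by
      intro A' hA' hfA' hA'B hf0
      by_cases hi : (A' ∩ B) = ∅
      · have he : A' \ B = A' := by
          ext x; simp only [Set.mem_diff, and_iff_left_iff_imp]
          intro hx hxB
          have : x ∈ A' ∩ B := ⟨hx, hxB⟩
          rw [hi] at this; exact this
        rw [he, hfA'] at hf0
        exact hz (by linear_combination -hf0)
      · have hi' : (A' ∩ B).Nonempty := Set.nonempty_iff_ne_empty.mpr hi
        have hsplit := hadd (A' ∩ B) (A' \ B) hi' hA'B (by ext x; simp; try tauto)
        rw [Set.inter_union_diff, hf0, hfA', add_zero] at hsplit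
        exact L1 (A' ∩ B) Set.inter_subset_right hi' hsplit
    by_cases hABc : A \ B = Bᶜ
    · obtain ⟨c, hc⟩ := id hA2
      by_cases h1 : (Bᶜ \ {c}).Nonempty
      · have hcA : c ∈ A := hc.1
        have hcB : c ∉ B := hc.2
        have hA'ne : (A \ {c}).Nonempty := by
          obtain ⟨y, hy1, hy2⟩ := h1
          refine ⟨y, ?_, hy2⟩
          have : y ∈ A \ B := by rw [hABc]; exact hy1
          exact this.1
        have hfA' : f (A \ {c}) = -z := by
          have h3 := hadd (A \ {c}) {c} hA'ne (Set.singleton_nonempty c)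
            (by ext x; simp; try tauto)
          have hu : (A \ {c}) ∪ {c} = A := by
            rw [Set.diff_union_self]
            exact Set.union_eq_self_of_subset_right (Set.singleton_subset_iff.mpr hcA)
          rw [hu, hsing c hcB, add_zero, hfA] at h3
          exact h3
        have hd : (A \ {c}) \ B = Bᶜ \ {c} := by
          rw [← hABc]; ext x; simp; try tauto
        refine key (A \ {c}) hA'ne hfA' (by rw [hd]; exact h1) ?_
        rw [hd]
        refine hCzero _ Set.diff_subset h1 (fun he => ?_)
        have : c ∈ Bᶜ \ {c} := by rw [he]; exact hc.2
        exact this.2 rfl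
      · -- Bᶜ \ {c} empty, so A \ B = Bᶜ = {c}
        have hfAB : f (A \ B) = 0 := by
          have : A \ B = {c} := by
            rw [hABc]
            ext x
            simp only [Set.mem_singleton_iff]
            constructor
            · intro hx
              by_contra hne
              exact h1 ⟨x, hx, hne⟩
            · rintro rfl; exact hc.2
          rw [this]
          exact hsing c hc.2
        exact key A hA hfA hA2 hfAB
    · exact key A hA hfA hA2
        (hCzero (A \ B) (fun x hx => hx.2) hA2 hABc)
  obtain ⟨p, hfp⟩ := hp
  -- a -z set must contain p
  have L2 : ∀ C : Set X, C.Nonempty → f C = -z → p ∈ C := by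
    intro C hC hfC
    by_contra hpC
    have h3 := hadd C {p} hC (Set.singleton_nonempty p)
      (Set.inter_singleton_eq_empty.mpr hpC)
    rw [hfC, hfp] at h3
    rcases hval (C ∪ {p}) (hC.mono Set.subset_union_left) with h | h | h <;> rw [h] at h3
    · exact hz (by linear_combination -h3)
    · exact hz (by linear_combination -h3/2)
    · exact hz (by linear_combination -h3/3)
  -- a z-set avoids p
  have L3 : ∀ C : Set X, C.Nonempty → f C = z → p ∉ C := by
    intro C hC hfC hpC
    by_cases h : C = {p}
    · rw [h, hfp] at hfC
      exact hz (by linear_combination -hfC/2)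
    · have hne : (C \ {p}).Nonempty := Set.diff_nonempty.mpr
        (fun hsub => h (subset_antisymm hsub (Set.singleton_subset_iff.mpr hpC)))
      have h3 := hadd {p} (C \ {p}) (Set.singleton_nonempty p) hne
        (by ext x; simp; try tauto)
      rw [Set.union_diff_cancel (Set.singleton_subset_iff.mpr hpC), hfp, hfC] at h3
      rcases hval (C \ {p}) hne with h' | h' | h' <;> rw [h'] at h3
      · exact hz (by linear_combination -h3/3)
      · exact hz (by linear_combination -h3/2)
      · exact hz (by linear_combination -h3)
  -- the candidate ultrafilter
  refine ⟨p, {A : Set X | A.Nonempty ∧ f A = z}, ?_, htop⟩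
  have hsub : ∀ A ∈ {A : Set X | A.Nonempty ∧ f A = z}, A ⊆ ({p}ᶜ : Set X) :=
    fun A hA x hx hxp => L3 A hA.1 hA.2 (Set.mem_singleton_iff.mp hxp ▸ hx)
  have hBsub : B ⊆ ({p}ᶜ : Set X) := hsub B ⟨hB, hfB⟩
  have hYF : ({p}ᶜ : Set X) ∈ {A : Set X | A.Nonempty ∧ f A = z} := by
    by_cases hBY : B = ({p}ᶜ : Set X)
    · rw [← hBY]; exact ⟨hB, hfB⟩
    · have hYB : (({p}ᶜ : Set X) \ B).Nonempty := Set.diff_nonempty.mpr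
        (fun hsub' => hBY (subset_antisymm hBsub hsub'))
      have hf0 : f (({p}ᶜ : Set X) \ B) = 0 := by
        rcases hval _ hYB with h | h | h
        · exact absurd (L2 _ hYB h).1 (fun h' => h' rfl)
        · exact h
        · exact absurd h (fun h => L0 B _ hB hYB (by ext x; simp; try tauto) hfB h)
      have h3 := hadd B _ hB hYB (by ext x; simp; try tauto)
      rw [Set.union_diff_cancel hBsub, hfB, hf0, add_zero] at h3
      exact ⟨hB.mono hBsub, h3.symm⟩
  refine ⟨hsub, fun h => h.1.ne_empty rfl, hYF, ?_, ?_, ?_⟩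
  · -- intersections
    rintro A1 ⟨h1, hf1⟩ A2 ⟨h2, hf2⟩
    have hne : (A1 ∩ A2).Nonempty := by
      by_contra h
      rw [Set.not_nonempty_iff_eq_empty] at h
      exact L0 A1 A2 h1 h2 h hf1 hf2
    refine ⟨hne, ?_⟩
    by_cases hd : (A2 \ A1) = ∅
    · have he : A1 ∩ A2 = A2 := Set.inter_eq_right.mpr
        (fun x hx => by_contra fun hx1 => by
          have : x ∈ A2 \ A1 := ⟨hx, hx1⟩
          rw [hd] at this; exact this)
      rw [he]; exact hf2
    · have hdne := Set.nonempty_iff_ne_empty.mpr hd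
      have hsplit := hadd (A1 ∩ A2) (A2 \ A1) hne hdne (by ext x; simp; try tauto)
      have hu : (A1 ∩ A2) ∪ (A2 \ A1) = A2 := by ext x; simp; try tauto
      rw [hu, hf2] at hsplit
      rcases hval _ hdne with h | h | h
      · exact absurd ((L2 _ hdne h).1) (fun h' => (hsub A2 ⟨h2, hf2⟩ (L2 _ hdne h).1) rfl)
      · rw [h, add_zero] at hsplit; exact hsplit
      · exact absurd h (fun h => L0 A1 (A2 \ A1) h1 hdne (by ext x; simp; try tauto) hf1 h)
  · -- supersets
    rintro A1 ⟨h1, hf1⟩ C hAC hCY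
    refine ⟨h1.mono hAC, ?_⟩
    by_cases h : C = A1
    · rw [h]; exact hf1
    · have hne : (C \ A1).Nonempty := Set.diff_nonempty.mpr
        (fun hsub' => h (subset_antisymm hsub' hAC))
      have hf0 : f (C \ A1) = 0 := by
        rcases hval _ hne with h' | h' | h'
        · exact absurd (hCY (L2 _ hne h').1) (fun h'' => h'' rfl)
        · exact h'
        · exact absurd h' (fun h' => L0 A1 (C \ A1) h1 hne (by ext x; simp; try tauto) hf1 h')
      have h3 := hadd A1 (C \ A1) h1 hne (by ext x; simp; try tauto)
      rw [Set.union_diff_cancel hAC, hf1, hf0, add_zero] at h3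
      exact h3.symm
  · -- dichotomy
    intro C hCY
    by_cases hC : C.Nonempty
    · by_cases hC2 : (({p}ᶜ : Set X) \ C).Nonempty
      · rcases hval C hC with h | h | h
        · exact absurd (hCY (L2 C hC h)) (fun h' => h' rfl)
        · right
          refine ⟨hC2, ?_⟩
          have h3 := hadd C _ hC hC2 (by ext x; simp; try tauto)
          rw [Set.union_diff_cancel hCY, h, zero_add] at h3
          rw [h3]; exact hYF.2
        · exact Or.inl ⟨hC, h⟩
      · left
        have : C = ({p}ᶜ : Set X) := subset_antisymm hCY
          (fun x hx => by_contra fun hxC => hC2 ⟨x, hx, hxC⟩)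
        rw [this]; exact hYF
    · right
      rw [Set.not_nonempty_iff_eq_empty] at hC
      rw [hC, Set.diff_empty]
      exact hYF


private theorem stmt16_backward_aux {X : Type*} [TopologicalSpace X] (z : ℂ) (hz : z ≠ 0)
    (p : X) (F : Set (Set X))
    (hUF : (∀ A ∈ F, A ⊆ ({p}ᶜ : Set X)) ∧ ∅ ∉ F ∧ ({p}ᶜ : Set X) ∈ F ∧
      (∀ A ∈ F, ∀ B ∈ F, A ∩ B ∈ F) ∧
      (∀ A ∈ F, ∀ B : Set X, A ⊆ B → B ⊆ ({p}ᶜ : Set X) → B ∈ F) ∧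
      (∀ B : Set X, B ⊆ ({p}ᶜ : Set X) → B ∈ F ∨ ({p}ᶜ : Set X) \ B ∈ F))
    (htop : {A : Set X | IsOpen A} = {∅, Set.univ} ∪ F) :
    ∃ f : Set X → ℂ,
        (∀ A : Set X, A.Nonempty → f A = -z ∨ f A = 0 ∨ f A = z) ∧
        (∃ A : Set X, A.Nonempty ∧ f A = -z) ∧
        (∃ A : Set X, A.Nonempty ∧ f A = 0) ∧
        (∃ A : Set X, A.Nonempty ∧ f A = z) ∧
        (∀ A B : Set X, A.Nonempty → B.Nonempty → A ∩ B = ∅ →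
          f A + f B = f (A ∪ B)) ∧
        ({A : Set X | IsOpen A} =
            {∅, Set.univ} ∪ {A : Set X | A.Nonempty ∧ f A = -z} ∨
          {A : Set X | IsOpen A} =
            {∅, Set.univ} ∪ {A : Set X | A.Nonempty ∧ f A = z}) := by
  classical
  obtain ⟨hsub, hempty, hY, hinter, hsuper, hdich⟩ := hUF
  have hzz : -z ≠ z := fun h => hz (by linear_combination -h/2)
  have hz0 : -z ≠ 0 := fun h => hz (by linear_combination -h)
  have hYne : (({p}ᶜ : Set X)).Nonempty := by
    rcases Set.eq_empty_or_nonempty ({p}ᶜ : Set X) with h | h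
    · exact absurd hY (h ▸ hempty)
    · exact h
  have hUnion : ∀ C D : Set X, C ⊆ ({p}ᶜ : Set X) → D ⊆ ({p}ᶜ : Set X) →
      (C ∪ D ∈ F ↔ C ∈ F ∨ D ∈ F) := by
    intro C D hC hD
    constructor
    · intro h
      by_contra hn
      push_neg at hn
      have h1 : ({p}ᶜ : Set X) \ C ∈ F := (hdich C hC).resolve_left hn.1
      have h2 : ({p}ᶜ : Set X) \ D ∈ F := (hdich D hD).resolve_left hn.2
      have h3 := hinter _ (hinter _ h1 _ h2) _ h
      have : (({p}ᶜ : Set X) \ C ∩ (({p}ᶜ : Set X) \ D)) ∩ (C ∪ D) = ∅ := by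
        ext x; simp; tauto
      rw [this] at h3
      exact hempty h3
    · rintro (h | h)
      · exact hsuper C h _ Set.subset_union_left (Set.union_subset hC hD)
      · exact hsuper D h _ Set.subset_union_right (Set.union_subset hC hD)
  refine ⟨fun A => z * ((if A \ {p} ∈ F then (1 : ℂ) else 0) - (if p ∈ A then (1 : ℂ) else 0)),
    ?_, ?_, ?_, ?_, ?_, ?_⟩
  · intro A _
    by_cases h1 : A \ {p} ∈ F <;> by_cases h2 : p ∈ A <;> simp [h1, h2] <;> ring_nf <;> tauto
  · refine ⟨{p}, Set.singleton_nonempty p, ?_⟩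
    have h1 : ({p} : Set X) \ {p} ∉ F := by rw [Set.diff_self]; exact hempty
    beta_reduce
    rw [if_neg h1, if_pos (Set.mem_singleton p)]; ring
  · refine ⟨Set.univ, ⟨p, trivial⟩, ?_⟩
    have h1 : (Set.univ : Set X) \ {p} ∈ F := by
      rw [← Set.compl_eq_univ_diff]; exact hY
    beta_reduce
    rw [if_pos h1, if_pos (Set.mem_univ p)]; ring
  · refine ⟨({p}ᶜ : Set X), hYne, ?_⟩
    have h1 : ({p}ᶜ : Set X) \ {p} ∈ F := by
      rw [Set.diff_singleton_eq_self (by simp)]; exact hY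
    have h2 : p ∉ ({p}ᶜ : Set X) := by simp
    beta_reduce
    rw [if_pos h1, if_neg h2]; ring
  · intro A B hA hB hAB
    have hd : (A \ {p}) ∩ (B \ {p}) = ∅ := by
      apply Set.eq_empty_of_subset_empty
      rw [← hAB]
      exact Set.inter_subset_inter Set.diff_subset Set.diff_subset
    have hnb : ¬(A \ {p} ∈ F ∧ B \ {p} ∈ F) := fun ⟨u, v⟩ =>
      hempty (hd ▸ hinter _ u _ v)
    have hu : (A ∪ B) \ {p} = (A \ {p}) ∪ (B \ {p}) := Set.union_diff_distrib
    have hsA : A \ {p} ⊆ ({p}ᶜ : Set X) := fun x hx => hx.2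
    have hsB : B \ {p} ⊆ ({p}ᶜ : Set X) := fun x hx => hx.2
    have hiff : ((A ∪ B) \ {p} ∈ F) ↔ (A \ {p} ∈ F ∨ B \ {p} ∈ F) := by
      rw [hu]; exact hUnion _ _ hsA hsB
    have hpAB : ¬(p ∈ A ∧ p ∈ B) := fun ⟨u, v⟩ => by
      have : p ∈ A ∩ B := ⟨u, v⟩
      rw [hAB] at this; exact this
    beta_reduce
    have hbU : ∀ hc : (if p ∈ A then (1 : ℂ) else 0) + (if p ∈ B then (1 : ℂ) else 0) =
        (@ite ℂ (p ∈ A ∪ B) (Classical.propDecidable _) (1 : ℂ) 0), True := fun _ => trivial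
    clear hbU
    have key : ∀ u v w : ℂ, (if p ∈ A then (1 : ℂ) else 0) + (if p ∈ B then (1 : ℂ) else 0) =
        (@ite ℂ (p ∈ A ∪ B) (Classical.propDecidable _) (1 : ℂ) 0) →
        u + v = w →
        z * (u - (if p ∈ A then (1 : ℂ) else 0)) + z * (v - (if p ∈ B then (1 : ℂ) else 0)) =
        z * (w - (@ite ℂ (p ∈ A ∪ B) (Classical.propDecidable _) (1 : ℂ) 0)) := by
      intro u v w h h'
      rw [← h, ← h']; ring
    refine key _ _ _ ?_ ?_
    · by_cases h3 : p ∈ A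
      · have h4 : p ∉ B := fun h => hpAB ⟨h3, h⟩
        rw [if_pos h3, if_neg h4, if_pos (Set.mem_union_left _ h3), add_zero]
      · by_cases h4 : p ∈ B
        · rw [if_neg h3, if_pos h4, if_pos (Set.mem_union_right _ h4), zero_add]
        · have h5 : p ∉ A ∪ B := fun h => ((Set.mem_union p A B).mp h).elim h3 h4
          rw [if_neg h3, if_neg h4, if_neg h5, add_zero]
    · by_cases h1 : A \ {p} ∈ F
      · have h2 : B \ {p} ∉ F := fun h => hnb ⟨h1, h⟩
        rw [if_pos h1, if_neg h2, if_pos (hiff.mpr (Or.inl h1)), add_zero]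
      · by_cases h2 : B \ {p} ∈ F
        · rw [if_neg h1, if_pos h2, if_pos (hiff.mpr (Or.inr h2)), zero_add]
        · have h5 : (A ∪ B) \ {p} ∉ F := fun h => (hiff.mp h).elim h1 h2
          rw [if_neg h1, if_neg h2, if_neg h5, add_zero]
  · right
    rw [htop]
    beta_reduce
    have hFeq : F = {A : Set X | A.Nonempty ∧
        z * ((if A \ {p} ∈ F then (1 : ℂ) else 0) - (if p ∈ A then (1 : ℂ) else 0)) = z} := by
      ext A
      constructor
      · intro hAF
        have hApne : A.Nonempty := by
          rcases Set.eq_empty_or_nonempty A with h | h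
          · exact absurd hAF (h ▸ hempty)
          · exact h
        have hpA : p ∉ A := fun h => hsub A hAF h rfl
        have h1 : A \ {p} ∈ F := by
          rwa [Set.diff_singleton_eq_self hpA]
        exact ⟨hApne, by rw [if_pos h1, if_neg hpA]; ring⟩
      · rintro ⟨hApne, hfA⟩
        by_cases h1 : A \ {p} ∈ F <;> by_cases h2 : p ∈ A
        · rw [if_pos h1, if_pos h2] at hfA
          exact absurd (by linear_combination -hfA) hz
        · rwa [Set.diff_singleton_eq_self h2] at h1
        · rw [if_neg h1, if_pos h2] at hfA
          exact absurd (by linear_combination -hfA/2) hz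
        · rw [if_neg h1, if_neg h2] at hfA
          exact absurd (by linear_combination -hfA) hz
    rw [← hFeq]

/-- for `X` with at least four points and `z ≠ 0`, the topology `𝒯`
arises from a surjection `f : 𝒫(X) \ {∅} → {-z, 0, z}`, additive on nonempty disjoint
sets, with `𝒯 = {∅, X} ∪ f⁻¹(-z)` or `𝒯 = {∅, X} ∪ f⁻¹(z)`, iff there exist `p ∈ X` and
an ultrafilter `𝓕'` on `X \ {p}` such that `𝒯 = {∅, X} ∪ 𝓕'`. -/
theorem stmt_16 {X : Type*} [TopologicalSpace X]
    (h4 : ∃ a b c d : X, a ≠ b ∧ a ≠ c ∧ a ≠ d ∧ b ≠ c ∧ b ≠ d ∧ c ≠ d)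
    (z : ℂ) (hz : z ≠ 0) :
    (∃ f : Set X → ℂ,
        (∀ A : Set X, A.Nonempty → f A = -z ∨ f A = 0 ∨ f A = z) ∧
        (∃ A : Set X, A.Nonempty ∧ f A = -z) ∧
        (∃ A : Set X, A.Nonempty ∧ f A = 0) ∧
        (∃ A : Set X, A.Nonempty ∧ f A = z) ∧
        (∀ A B : Set X, A.Nonempty → B.Nonempty → A ∩ B = ∅ →
          f A + f B = f (A ∪ B)) ∧
        ({A : Set X | IsOpen A} =
            {∅, Set.univ} ∪ {A : Set X | A.Nonempty ∧ f A = -z} ∨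
          {A : Set X | IsOpen A} =
            {∅, Set.univ} ∪ {A : Set X | A.Nonempty ∧ f A = z})) ↔
    (∃ p : X, ∃ F : Set (Set X), IsUltrafilterOn ({p}ᶜ : Set X) F ∧
      {A : Set X | IsOpen A} = {∅, Set.univ} ∪ F) := by
  constructor
  · rintro ⟨f, hval, hneg, h0, hpos, hadd, htop | htop⟩
    · -- case 𝒯 = {∅, X} ∪ f⁻¹(-z): apply the aux lemma to -f
      have hval' : ∀ A : Set X, A.Nonempty → -f A = -z ∨ -f A = 0 ∨ -f A = z := by
        intro A hA
        rcases hval A hA with h | h | h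
        · exact Or.inr (Or.inr (by rw [h]; ring))
        · exact Or.inr (Or.inl (by rw [h]; ring))
        · exact Or.inl (by rw [h])
      have hneg' : ∃ A : Set X, A.Nonempty ∧ -f A = -z := by
        obtain ⟨A, hA, h⟩ := hpos; exact ⟨A, hA, by rw [h]⟩
      have hpos' : ∃ A : Set X, A.Nonempty ∧ -f A = z := by
        obtain ⟨A, hA, h⟩ := hneg; exact ⟨A, hA, by rw [h]; ring⟩
      have hadd' : ∀ A B : Set X, A.Nonempty → B.Nonempty → A ∩ B = ∅ →
          -f A + -f B = -f (A ∪ B) := by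
        intro A B hA hB hAB
        have := hadd A B hA hB hAB
        linear_combination -this
      have htop' : {A : Set X | IsOpen A} =
          {∅, Set.univ} ∪ {A : Set X | A.Nonempty ∧ -f A = z} := by
        rw [htop]
        congr 1
        ext A
        simp only [Set.mem_setOf_eq, and_congr_right_iff]
        intro _
        constructor
        · intro h; rw [h]; ring
        · intro h; linear_combination -h
      obtain ⟨p, F, hUF, htopF⟩ := stmt16_forward_aux (fun A => -f A) z hz hval' hneg'
        hpos' hadd' htop'
      exact ⟨p, F, hUF, htopF⟩
    · obtain ⟨p, F, hUF, htopF⟩ := stmt16_forward_aux f z hz hval hneg hpos hadd htop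
      exact ⟨p, F, hUF, htopF⟩
  · rintro ⟨p, F, hUF, htop⟩
    exact stmt16_backward_aux z hz p F hUF htop
end

section
/- Let X be a set with at least four points, let z be a nonzero complex number, and let 𝒯 be a topology on X. The following are equivalent: (a) there exists a function f from the nonempty subsets of X to {0, z, 2z}, surjective onto {0, z, 2z}, satisfying f(A) + f(B) = f(A ∪ B) for all nonempty disjoint subsets A, B of X, such that 𝒯 = {∅, X} ∪ {A : A ≠ ∅, f(A) = 2z}; (b) there exist A ⊆ X and ultrafilters 𝓕' on A and 𝓕'' on X \ A such that 𝒯 = {∅, X} ∪ {F' ∪ F'' : F' ∈ 𝓕', F'' ∈ 𝓕''}. -/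
lemma fsub_aux {X : Type*} {z : ℂ} (hz : z ≠ 0) {f : Set X → ℂ}
    (hval : ∀ A : Set X, A.Nonempty → f A = 0 ∨ f A = z ∨ f A = 2 * z)
    (hadd : ∀ A B : Set X, A.Nonempty → B.Nonempty → A ∩ B = ∅ → f A + f B = f (A ∪ B))
    {Y : Set X} (hfY : f Y = z) :
    ∀ B : Set X, B ⊆ Y → B.Nonempty → f B = 0 ∨ f B = z := by
  intro B hBY hB
  by_cases hBe : Y \ B = ∅
  · have hBY' : B = Y := subset_antisymm hBY (Set.diff_eq_empty.mp hBe)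
    right; rw [hBY', hfY]
  · have hE : (Y \ B).Nonempty := Set.nonempty_iff_ne_empty.mpr hBe
    have hd : B ∩ (Y \ B) = ∅ := by ext x; simp <;> tauto
    have h1 := hadd B (Y \ B) hB hE hd
    rw [Set.union_diff_cancel hBY, hfY] at h1
    rcases hval B hB with h | h | h
    · left; exact h
    · right; exact h
    · exfalso; rcases hval _ hE with h2 | h2 | h2 <;> rw [h, h2] at h1 <;> apply hz
      · linear_combination h1
      · linear_combination h1 / 2
      · linear_combination h1 / 3

lemma ultra_of_additive {X : Type*} {z : ℂ} (hz : z ≠ 0) {f : Set X → ℂ}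
    (hval : ∀ A : Set X, A.Nonempty → f A = 0 ∨ f A = z ∨ f A = 2 * z)
    (hadd : ∀ A B : Set X, A.Nonempty → B.Nonempty → A ∩ B = ∅ → f A + f B = f (A ∪ B))
    {Y : Set X} (hY : Y.Nonempty) (hfY : f Y = z) :
    IsUltrafilterOn Y {B | B.Nonempty ∧ B ⊆ Y ∧ f B = z} := by
  have hsub := fsub_aux hz hval hadd hfY
  refine ⟨fun A hA => hA.2.1, fun h => h.1.ne_empty rfl, ⟨hY, subset_rfl, hfY⟩, ?_, ?_, ?_⟩
  · -- intersections
    rintro B ⟨hB, hBY, hfB⟩ C ⟨hC, hCY, hfC⟩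
    have hBCne : (B ∩ C).Nonempty := by
      rw [Set.nonempty_iff_ne_empty]
      intro hd
      have h1 := hadd B C hB hC hd
      rw [hfB, hfC] at h1
      rcases hsub (B ∪ C) (Set.union_subset hBY hCY) (hB.mono Set.subset_union_left) with h | h <;>
        rw [h] at h1 <;> apply hz
      · linear_combination h1 / 2
      · linear_combination h1
    refine ⟨hBCne, (Set.inter_subset_left).trans hBY, ?_⟩
    by_cases hE : B \ C = ∅
    · have : B ∩ C = B := Set.inter_eq_left.mpr (Set.diff_eq_empty.mp hE)
      rw [this]; exact hfB
    · have hEne : (B \ C).Nonempty := Set.nonempty_iff_ne_empty.mpr hE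
      have hd : (B ∩ C) ∩ (B \ C) = ∅ := by ext x; simp <;> tauto
      have hu : (B ∩ C) ∪ (B \ C) = B := by ext x; simp <;> tauto
      have h1 := hadd _ _ hBCne hEne hd
      rw [hu, hfB] at h1
      rcases hsub _ ((Set.inter_subset_left).trans hBY) hBCne with h | h
      · exfalso
        rw [h] at h1
        have hfE : f (B \ C) = z := by linear_combination h1
        have hd2 : (B \ C) ∩ C = ∅ := by ext x; simp <;> tauto
        have h2 := hadd _ _ hEne hC hd2
        rw [hfE, hfC] at h2
        rcases hsub (B \ C ∪ C) (Set.union_subset ((Set.diff_subset).trans hBY) hCY)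
            (hC.mono Set.subset_union_right) with h3 | h3 <;> rw [h3] at h2 <;> apply hz
        · linear_combination h2 / 2
        · linear_combination h2
      · exact h
  · -- supersets
    rintro B ⟨hB, hBY, hfB⟩ C hBC hCY
    refine ⟨hB.mono hBC, hCY, ?_⟩
    by_cases hE : C \ B = ∅
    · have : C = B := subset_antisymm (Set.diff_eq_empty.mp hE) hBC
      rw [this]; exact hfB
    · have hEne : (C \ B).Nonempty := Set.nonempty_iff_ne_empty.mpr hE
      have hd : B ∩ (C \ B) = ∅ := by ext x; simp <;> tauto
      have hu : B ∪ (C \ B) = C := Set.union_diff_cancel hBC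
      have h1 := hadd _ _ hB hEne hd
      rw [hu, hfB] at h1
      rcases hsub _ ((Set.diff_subset).trans hCY) hEne with h | h
      · rcases hsub C hCY (hB.mono hBC) with h2 | h2
        · exfalso; rw [h, h2] at h1; exact hz (by linear_combination h1)
        · exact h2
      · exfalso
        rw [h] at h1
        rcases hsub C hCY (hB.mono hBC) with h2 | h2 <;> rw [h2] at h1 <;> apply hz
        · linear_combination h1 / 2
        · linear_combination h1
  · -- B or Y \ B
    intro B hBY
    by_cases hB : B = ∅
    · right; rw [hB, Set.diff_empty]; exact ⟨hY, subset_rfl, hfY⟩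
    · have hBne : B.Nonempty := Set.nonempty_iff_ne_empty.mpr hB
      by_cases hE : Y \ B = ∅
      · left
        have : B = Y := subset_antisymm hBY (Set.diff_eq_empty.mp hE)
        rw [this]; exact ⟨hY, subset_rfl, hfY⟩
      · have hEne : (Y \ B).Nonempty := Set.nonempty_iff_ne_empty.mpr hE
        have hd : B ∩ (Y \ B) = ∅ := by ext x; simp <;> tauto
        have h1 := hadd _ _ hBne hEne hd
        rw [Set.union_diff_cancel hBY, hfY] at h1
        rcases hsub B hBY hBne with h | h
        · right
          refine ⟨hEne, Set.diff_subset, ?_⟩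
          rw [h] at h1; linear_combination h1
        · left; exact ⟨hBne, hBY, h⟩

open Classical in
lemma ind_add {X : Type*} {Y : Set X} {G : Set (Set X)} (hG : IsUltrafilterOn Y G) (z : ℂ) :
    ∀ B C : Set X, B ∩ C = ∅ →
      (if B ∩ Y ∈ G then z else 0) + (if C ∩ Y ∈ G then z else 0)
        = if (B ∪ C) ∩ Y ∈ G then z else 0 := by
  obtain ⟨hsub, hne, hYm, hint, hsup, hor⟩ := hG
  intro B C hBC
  have hBC' : ∀ x, x ∈ B → x ∉ C := fun x hx hc =>
    Set.eq_empty_iff_forall_notMem.mp hBC x ⟨hx, hc⟩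
  by_cases hB : B ∩ Y ∈ G <;> by_cases hC : C ∩ Y ∈ G
  · exfalso
    have h0 : (B ∩ Y) ∩ (C ∩ Y) = ∅ := by
      rw [← Set.subset_empty_iff, ← hBC]
      intro x hx; exact ⟨hx.1.1, hx.2.1⟩
    exact hne (h0 ▸ hint _ hB _ hC)
  · have hu : (B ∪ C) ∩ Y ∈ G :=
      hsup _ hB _ (Set.inter_subset_inter_left Y Set.subset_union_left) Set.inter_subset_right
    simp [hB, hC, hu]
  · have hu : (B ∪ C) ∩ Y ∈ G :=
      hsup _ hC _ (Set.inter_subset_inter_left Y Set.subset_union_right) Set.inter_subset_right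
    simp [hB, hC, hu]
  · have hu : (B ∪ C) ∩ Y ∉ G := by
      intro h
      rcases hor (B ∩ Y) Set.inter_subset_right with h2 | h2
      · exact hB h2
      · have h3 := hint _ h _ h2
        have h4 : ((B ∪ C) ∩ Y) ∩ (Y \ (B ∩ Y)) = C ∩ Y := by
          ext x
          constructor
          · rintro ⟨⟨hx1, hx2⟩, hx3, hx4⟩
            rcases hx1 with h | h
            · exact absurd ⟨h, hx2⟩ hx4
            · exact ⟨h, hx2⟩
          · rintro ⟨hx1, hx2⟩
            exact ⟨⟨Or.inr hx1, hx2⟩, hx2, fun h => hBC' x h.1 hx1⟩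
        rw [h4] at h3
        exact hC h3
    simp [hB, hC, hu]

lemma singleton_notMem {X : Type*} {Y : Set X} {G : Set (Set X)}
    (hG : IsUltrafilterOn Y G) {y1 y2 : X} (h12 : y1 ≠ y2) (h1 : y1 ∈ Y) (h2 : y2 ∈ Y) :
    ∃ y ∈ Y, {y} ∉ G := by
  by_cases h : ({y1} : Set X) ∈ G
  · refine ⟨y2, h2, fun h' => ?_⟩
    have h3 := hG.2.2.2.1 _ h _ h'
    have h0 : ({y1} : Set X) ∩ {y2} = ∅ := by
      ext x; simp only [Set.mem_inter_iff, Set.mem_singleton_iff, Set.mem_empty_iff_false,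
        iff_false]
      rintro ⟨rfl, rfl⟩; exact h12 rfl
    exact hG.2.1 (h0 ▸ h3)
  · exact ⟨y1, h1, h⟩

/-- for `X` with at least four points and `z ≠ 0`, the topology `𝒯`
arises from a surjection `f : 𝒫(X) \ {∅} → {0, z, 2z}`, additive on nonempty disjoint
sets, with `𝒯 = {∅, X} ∪ f⁻¹(2z)`, iff there exist `A ⊆ X` and ultrafilters `𝓕'` on `A`
and `𝓕''` on `X \ A` such that `𝒯 = {∅, X} ∪ {F' ∪ F'' : F' ∈ 𝓕', F'' ∈ 𝓕''}`. -/
theorem stmt_17 {X : Type*} [TopologicalSpace X]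
    (h4 : ∃ a b c d : X, a ≠ b ∧ a ≠ c ∧ a ≠ d ∧ b ≠ c ∧ b ≠ d ∧ c ≠ d)
    (z : ℂ) (hz : z ≠ 0) :
    (∃ f : Set X → ℂ,
        (∀ A : Set X, A.Nonempty → f A = 0 ∨ f A = z ∨ f A = 2 * z) ∧
        (∃ A : Set X, A.Nonempty ∧ f A = 0) ∧
        (∃ A : Set X, A.Nonempty ∧ f A = z) ∧
        (∃ A : Set X, A.Nonempty ∧ f A = 2 * z) ∧
        (∀ A B : Set X, A.Nonempty → B.Nonempty → A ∩ B = ∅ →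
          f A + f B = f (A ∪ B)) ∧
        {A : Set X | IsOpen A} =
          {∅, Set.univ} ∪ {A : Set X | A.Nonempty ∧ f A = 2 * z}) ↔
    (∃ A : Set X, ∃ F F' : Set (Set X),
      IsUltrafilterOn A F ∧ IsUltrafilterOn Aᶜ F' ∧
      {B : Set X | IsOpen B} =
        {∅, Set.univ} ∪ {B : Set X | ∃ U ∈ F, ∃ V ∈ F', B = U ∪ V}) := by
  obtain ⟨a, b, c, d, hab, hac, had, hbc, hbd, hcd⟩ := h4
  constructor
  · rintro ⟨f, hval, -, ⟨A, hA, hAz⟩, ⟨C, hC, hC2⟩, hadd, hT⟩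
    have huniv : (Set.univ : Set X).Nonempty := ⟨a, trivial⟩
    have hfuniv : f Set.univ = 2 * z := by
      by_cases hCu : C = Set.univ
      · rw [← hCu]; exact hC2
      · have hCc : Cᶜ.Nonempty := by rwa [Set.nonempty_compl]
        have h1 := hadd C Cᶜ hC hCc (Set.inter_compl_self C)
        rw [Set.union_compl_self, hC2] at h1
        rcases hval Cᶜ hCc with h | h | h <;> rw [h] at h1 <;>
          rcases hval _ huniv with h2 | h2 | h2 <;> rw [h2] at h1 <;>
          first
          | exact h2
          | exact absurd (by linear_combination h1) hz
          | exact absurd (by linear_combination h1 / 2) hz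
          | exact absurd (by linear_combination h1 / 3) hz
          | exact absurd (by linear_combination h1 / 4) hz
    have hAu : A ≠ Set.univ := by
      intro h; rw [h, hfuniv] at hAz; exact hz (by linear_combination hAz)
    have hAc : Aᶜ.Nonempty := by rwa [Set.nonempty_compl]
    have hfAc : f Aᶜ = z := by
      have h1 := hadd A Aᶜ hA hAc (Set.inter_compl_self A)
      rw [Set.union_compl_self, hfuniv, hAz] at h1
      linear_combination h1
    refine ⟨A, _, _, ultra_of_additive hz hval hadd hA hAz,
      ultra_of_additive hz hval hadd hAc hfAc, ?_⟩
    rw [hT]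
    congr 1
    ext B
    simp only [Set.mem_setOf_eq]
    constructor
    · rintro ⟨hB, hfB⟩
      have hne1 : (B ∩ A).Nonempty := by
        rw [Set.nonempty_iff_ne_empty]
        intro he
        have hBA : B ⊆ Aᶜ := fun x hx hxA =>
          Set.eq_empty_iff_forall_notMem.mp he x ⟨hx, hxA⟩
        rcases fsub_aux hz hval hadd hfAc B hBA hB with h | h <;> rw [hfB] at h <;> apply hz
        · linear_combination h / 2
        · linear_combination h
      have hne2 : (B ∩ Aᶜ).Nonempty := by
        rw [Set.nonempty_iff_ne_empty]
        intro he
        have hBA : B ⊆ A := by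
          intro x hx
          by_contra hxA
          exact Set.eq_empty_iff_forall_notMem.mp he x ⟨hx, hxA⟩
        rcases fsub_aux hz hval hadd hAz B hBA hB with h | h <;> rw [hfB] at h <;> apply hz
        · linear_combination h / 2
        · linear_combination h
      have hd : (B ∩ A) ∩ (B ∩ Aᶜ) = ∅ := by ext x; simp <;> tauto
      have hu : (B ∩ A) ∪ (B ∩ Aᶜ) = B := Set.inter_union_compl B A
      have h1 := hadd _ _ hne1 hne2 hd
      rw [hu, hfB] at h1
      have h2 := fsub_aux hz hval hadd hAz _ Set.inter_subset_right hne1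
      have h3 := fsub_aux hz hval hadd hfAc _ Set.inter_subset_right hne2
      rcases h2 with h2 | h2 <;> rcases h3 with h3 | h3 <;> rw [h2, h3] at h1
      · exact absurd (by linear_combination -h1 / 2) hz
      · exact absurd (by linear_combination -h1) hz
      · exact absurd (by linear_combination -h1) hz
      · exact ⟨B ∩ A, ⟨hne1, Set.inter_subset_right, h2⟩,
          B ∩ Aᶜ, ⟨hne2, Set.inter_subset_right, h3⟩, hu.symm⟩
    · rintro ⟨U, ⟨hU, hUA, hUz⟩, V, ⟨hV, hVA, hVz⟩, rfl⟩
      have hd : U ∩ V = ∅ :=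
        Set.eq_empty_iff_forall_notMem.mpr fun x hx => hVA hx.2 (hUA hx.1)
      have h1 := hadd U V hU hV hd
      rw [hUz, hVz] at h1
      exact ⟨hU.mono Set.subset_union_left, by linear_combination -h1⟩
  · rintro ⟨A, F, F', hF, hF', hT⟩
    classical
    have hFne := hF.2.1
    have hF'ne := hF'.2.1
    have hFA := hF.2.2.1
    have hF'A := hF'.2.2.1
    have hAne : A.Nonempty :=
      Set.nonempty_iff_ne_empty.mpr fun h => hFne (h ▸ hFA)
    have hAcne : Aᶜ.Nonempty :=
      Set.nonempty_iff_ne_empty.mpr fun h => hF'ne (h ▸ hF'A)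
    have haddF := ind_add hF z
    have haddF' := ind_add hF' z
    refine ⟨fun B => (if B ∩ A ∈ F then z else 0) + (if B ∩ Aᶜ ∈ F' then z else 0),
      ?_, ?_, ?_, ?_, ?_, ?_⟩
    · intro B _
      beta_reduce
      by_cases h1 : B ∩ A ∈ F
      · by_cases h2 : B ∩ Aᶜ ∈ F'
        · rw [if_pos h1, if_pos h2]; exact Or.inr (Or.inr (by ring))
        · rw [if_pos h1, if_neg h2, add_zero]; exact Or.inr (Or.inl rfl)
      · by_cases h2 : B ∩ Aᶜ ∈ F'
        · rw [if_neg h1, if_pos h2, zero_add]; exact Or.inr (Or.inl rfl)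
        · rw [if_neg h1, if_neg h2, add_zero]; exact Or.inl rfl
    · -- exists f = 0
      have pair : (∃ x y : X, x ≠ y ∧ x ∈ A ∧ y ∈ A) ∨
          (∃ x y : X, x ≠ y ∧ x ∈ Aᶜ ∧ y ∈ Aᶜ) := by
        by_cases ha : a ∈ A <;> by_cases hb : b ∈ A <;> by_cases hc : c ∈ A <;>
          first
          | exact Or.inl ⟨a, b, hab, ha, hb⟩
          | exact Or.inl ⟨a, c, hac, ha, hc⟩
          | exact Or.inl ⟨b, c, hbc, hb, hc⟩
          | exact Or.inr ⟨a, b, hab, ha, hb⟩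
          | exact Or.inr ⟨a, c, hac, ha, hc⟩
          | exact Or.inr ⟨b, c, hbc, hb, hc⟩
      rcases pair with ⟨x, y, hxy, hxA, hyA⟩ | ⟨x, y, hxy, hxA, hyA⟩
      · obtain ⟨y0, hy0A, hy0⟩ := singleton_notMem hF hxy hxA hyA
        refine ⟨{y0}, Set.singleton_nonempty y0, ?_⟩
        beta_reduce
        have e1 : ({y0} : Set X) ∩ A = {y0} := Set.inter_eq_left.mpr (by simpa)
        have e2 : ({y0} : Set X) ∩ Aᶜ = ∅ := by
          ext w; simp only [Set.mem_inter_iff, Set.mem_singleton_iff, Set.mem_compl_iff,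
            Set.mem_empty_iff_false, iff_false]
          rintro ⟨rfl, h⟩; exact h hy0A
        rw [e1, e2, if_neg hy0, if_neg hF'ne, add_zero]
      · obtain ⟨y0, hy0A, hy0⟩ := singleton_notMem hF' hxy hxA hyA
        refine ⟨{y0}, Set.singleton_nonempty y0, ?_⟩
        beta_reduce
        have e1 : ({y0} : Set X) ∩ Aᶜ = {y0} := Set.inter_eq_left.mpr (by simpa using hy0A)
        have e2 : ({y0} : Set X) ∩ A = ∅ := by
          ext w; simp only [Set.mem_inter_iff, Set.mem_singleton_iff,
            Set.mem_empty_iff_false, iff_false]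
          rintro ⟨rfl, h⟩; exact hy0A h
        rw [e1, e2, if_neg hy0, if_neg hFne, zero_add]
    · -- exists f = z
      refine ⟨A, hAne, ?_⟩
      beta_reduce
      rw [Set.inter_self, Set.inter_compl_self, if_pos hFA, if_neg hF'ne, add_zero]
    · -- exists f = 2z
      refine ⟨Set.univ, ⟨a, trivial⟩, ?_⟩
      beta_reduce
      rw [Set.univ_inter, Set.univ_inter, if_pos hFA, if_pos hF'A]
      ring
    · -- additivity
      intro B C _ _ hd
      have h1 := haddF B C hd
      have h2 := haddF' B C hd
      linear_combination h1 + h2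
    · rw [hT]
      congr 1
      ext B
      simp only [Set.mem_setOf_eq]
      constructor
      · rintro ⟨U, hU, V, hV, rfl⟩
        have hUA : U ⊆ A := hF.1 U hU
        have hVA : V ⊆ Aᶜ := hF'.1 V hV
        have hVA0 : V ∩ A = ∅ := Set.eq_empty_iff_forall_notMem.mpr fun x hx => hVA hx.1 hx.2
        have hUA0 : U ∩ Aᶜ = ∅ := Set.eq_empty_iff_forall_notMem.mpr fun x hx => hx.2 (hUA hx.1)
        have e1 : (U ∪ V) ∩ A = U := by
          rw [Set.union_inter_distrib_right, Set.inter_eq_left.mpr hUA, hVA0, Set.union_empty]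
        have e2 : (U ∪ V) ∩ Aᶜ = V := by
          rw [Set.union_inter_distrib_right, hUA0, Set.inter_eq_left.mpr hVA, Set.empty_union]
        have hUne : U.Nonempty := Set.nonempty_iff_ne_empty.mpr fun h => hFne (h ▸ hU)
        refine ⟨hUne.mono Set.subset_union_left, ?_⟩
        rw [e1, e2, if_pos hU, if_pos hV]
        ring
      · rintro ⟨hB, hfB⟩
        by_cases m1 : B ∩ A ∈ F <;> by_cases m2 : B ∩ Aᶜ ∈ F' <;> simp [m1, m2] at hfB
        · exact ⟨B ∩ A, m1, B ∩ Aᶜ, m2, (Set.inter_union_compl B A).symm⟩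
        · exact absurd (by linear_combination -hfB) hz
        · exact absurd (by linear_combination -hfB) hz
        · exact absurd hfB hz
end
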